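/- arXiv:1808.03573 — 9 statements merged into one kernel-verified Lean document; each statement's English description precedes it below -/
import Mathlib

section
/- Let R_n denote the number of 2-bounded anchored permutations of [n]. Then R_1 = R_2 = R_3 = 1 and R_n = R_{n-1} + R_{n-3} for all n ≥ 4. -/
/-- A permutation of `Fin n` (representing `{1,…,n}` zero-indexed) is `k`-bounded
if consecutive entries differ by at most `k`. -/
def IsKBounded (k n : ℕ) (π : Equiv.Perm (Fin n)) : Prop :=
  ∀ i j : Fin n, (j : ℕ) = (i : ℕ) + 1 →
    (((π j : ℕ) : ℤ) - ((π i : ℕ) : ℤ)).natAbs ≤ k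

/-- Anchored: first entry is `1` and last entry is `n` (zero-indexed: fixes `0` and `n-1`). -/
def IsAnchored (n : ℕ) (π : Equiv.Perm (Fin n)) : Prop :=
  ∀ i : Fin n, ((i : ℕ) = 0 → π i = i) ∧ ((i : ℕ) = n - 1 → π i = i)

/-- The number of `k`-bounded anchored permutations of `{1,…,n}`. -/
noncomputable def numAnchored (k n : ℕ) : ℕ :=
  Nat.card {π : Equiv.Perm (Fin n) // IsKBounded k n π ∧ IsAnchored n π}

abbrev Vsub (n : ℕ) := {π : Equiv.Perm (Fin n) // IsKBounded 2 n π ∧ IsAnchored n π}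

lemma perm_val_inj {n : ℕ} (π : Equiv.Perm (Fin n)) {i j : ℕ} (hi : i < n) (hj : j < n)
    (h : (π ⟨i, hi⟩ : ℕ) = (π ⟨j, hj⟩ : ℕ)) : i = j := by
  have := π.injective (Fin.ext h)
  simpa using congrArg Fin.val this

lemma perm_val_congr {n : ℕ} (π : Equiv.Perm (Fin n)) {i j : ℕ} (hi : i < n) (hj : j < n)
    (h : i = j) : (π ⟨i, hi⟩ : ℕ) = (π ⟨j, hj⟩ : ℕ) := by subst h; rfl

lemma bounded_val {n : ℕ} {π : Equiv.Perm (Fin n)} (hb : IsKBounded 2 n π)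
    {i j : ℕ} (hi : i < n) (hj : j < n) (hij : j = i + 1) :
    (π ⟨j, hj⟩ : ℕ) ≤ (π ⟨i, hi⟩ : ℕ) + 2 ∧ (π ⟨i, hi⟩ : ℕ) ≤ (π ⟨j, hj⟩ : ℕ) + 2 := by
  have := hb ⟨i, hi⟩ ⟨j, hj⟩ hij
  omega

lemma anchored_zero {n : ℕ} {π : Equiv.Perm (Fin n)} (ha : IsAnchored n π) (h0 : 0 < n) :
    (π ⟨0, h0⟩ : ℕ) = 0 := by
  simpa using congrArg Fin.val ((ha ⟨0, h0⟩).1 rfl)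

lemma anchored_last {n : ℕ} {π : Equiv.Perm (Fin n)} (ha : IsAnchored n π) {i : ℕ}
    (hi : i < n) (h : i = n - 1) : (π ⟨i, hi⟩ : ℕ) = i := by
  subst h
  simpa using congrArg Fin.val ((ha ⟨n - 1, hi⟩).2 rfl)

section main
variable {m : ℕ}

/-- value at position 1 is 1 or 2 -/
lemma val_one (x : Vsub (m+4)) :
    (x.val ⟨1, by omega⟩ : ℕ) = 1 ∨ (x.val ⟨1, by omega⟩ : ℕ) = 2 := by
  obtain ⟨π, hb, ha⟩ := x
  simp only
  have h0 : (π ⟨0, by omega⟩ : ℕ) = 0 := anchored_zero ha (by omega)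
  have hB := bounded_val hb (by omega : 0 < m+4) (by omega : 1 < m+4) rfl
  have hne : (π ⟨1, by omega⟩ : ℕ) ≠ 0 := fun h => by
    have := perm_val_inj π (by omega : 1 < m+4) (by omega : (0:ℕ) < m+4) (h.trans h0.symm)
    omega
  omega

lemma exists_pos_of_val {n : ℕ} (π : Equiv.Perm (Fin n)) {v : ℕ} (hv : v < n) :
    ∃ P : ℕ, ∃ h : P < n, (π ⟨P, h⟩ : ℕ) = v := by
  refine ⟨(π.symm ⟨v, hv⟩ : ℕ), (π.symm ⟨v, hv⟩).isLt, ?_⟩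
  rw [Fin.eta, Equiv.apply_symm_apply]

lemma case2_struct {m : ℕ} (x : Vsub (m+4)) (h1 : (x.val ⟨1, by omega⟩ : ℕ) = 2) :
    (x.val ⟨2, by omega⟩ : ℕ) = 1 ∧ (x.val ⟨3, by omega⟩ : ℕ) = 3 := by
  obtain ⟨π, hb, ha⟩ := x
  simp only at h1 ⊢
  have h0 : (π ⟨0, by omega⟩ : ℕ) = 0 := anchored_zero ha (by omega)
  have hlast : (π ⟨m+3, by omega⟩ : ℕ) = m + 3 := anchored_last ha (by omega) (by omega)
  obtain ⟨P, hPlt, hP⟩ := exists_pos_of_val π (show 1 < m+4 by omega)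
  have hP0 : P ≠ 0 := fun h => by
    have := perm_val_congr π hPlt (by omega : (0:ℕ) < m+4) h
    omega
  have hP1 : P ≠ 1 := fun h => by
    have := perm_val_congr π hPlt (by omega : (1:ℕ) < m+4) h
    omega
  have hPlast : P ≠ m+3 := fun h => by
    have := perm_val_congr π hPlt (by omega : m+3 < m+4) h
    omega
  have hq1 : P - 1 < m + 4 := by omega
  have hq2 : P + 1 < m + 4 := by omega
  have hA := bounded_val hb hq1 hPlt (by omega)
  have hB := bounded_val hb hPlt hq2 rfl
  have ha1 : (π ⟨P-1, hq1⟩ : ℕ) ≠ 1 := fun h => by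
    have := perm_val_inj π hq1 hPlt (h.trans hP.symm)
    omega
  have hbb1 : (π ⟨P+1, hq2⟩ : ℕ) ≠ 1 := fun h => by
    have := perm_val_inj π hq2 hPlt (h.trans hP.symm)
    omega
  have ha0 : (π ⟨P-1, hq1⟩ : ℕ) ≠ 0 := fun h => by
    have := perm_val_inj π hq1 (by omega : (0:ℕ) < m+4) (h.trans h0.symm)
    omega
  have hbb0 : (π ⟨P+1, hq2⟩ : ℕ) ≠ 0 := fun h => by
    have := perm_val_inj π hq2 (by omega : (0:ℕ) < m+4) (h.trans h0.symm)
    omega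
  have hbb2 : (π ⟨P+1, hq2⟩ : ℕ) ≠ 2 := fun h => by
    have := perm_val_inj π hq2 (by omega : (1:ℕ) < m+4) (h.trans h1.symm)
    omega
  have hb3 : (π ⟨P+1, hq2⟩ : ℕ) = 3 := by omega
  have ha3 : (π ⟨P-1, hq1⟩ : ℕ) ≠ 3 := fun h => by
    have := perm_val_inj π hq1 hq2 (h.trans hb3.symm)
    omega
  have ha2 : (π ⟨P-1, hq1⟩ : ℕ) = 2 := by omega
  have hp2 : P = 2 := by
    have := perm_val_inj π hq1 (by omega : (1:ℕ) < m+4) (ha2.trans h1.symm)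
    omega
  constructor
  · have := perm_val_congr π (by omega : (2:ℕ) < m+4) hPlt hp2.symm
    omega
  · have := perm_val_congr π (by omega : (3:ℕ) < m+4) hq2 (by omega)
    omega

lemma val_one' {m : ℕ} (x : Vsub (m+4)) (h : 1 < m+4) :
    (x.val ⟨1, h⟩ : ℕ) = 1 ∨ (x.val ⟨1, h⟩ : ℕ) = 2 := val_one x

section ext1
variable {m : ℕ}

/-- extension for case π(1)=1 -/
def f1 (σ : Equiv.Perm (Fin (m+3))) : Fin (m+4) → Fin (m+4) := fun i =>
  if h : (i : ℕ) = 0 then ⟨0, by omega⟩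
  else Fin.cast (by omega) ((σ ⟨(i : ℕ) - 1, by omega⟩).addNat 1)

lemma f1_zero (σ : Equiv.Perm (Fin (m+3))) (i : Fin (m+4)) (h : (i : ℕ) = 0) :
    (f1 σ i : ℕ) = 0 := by simp [f1, h]

lemma f1_val (σ : Equiv.Perm (Fin (m+3))) (i : Fin (m+4)) (h : (i : ℕ) ≠ 0)
    (hk : (i : ℕ) - 1 < m + 3) :
    (f1 σ i : ℕ) = (σ ⟨(i : ℕ) - 1, hk⟩ : ℕ) + 1 := by
  simp [f1, h]

lemma f1_inj (σ : Equiv.Perm (Fin (m+3))) : Function.Injective (f1 σ) := by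
  intro i j hij
  have hv := congrArg Fin.val hij
  have hki : (i : ℕ) - 1 < m + 3 := by omega
  have hkj : (j : ℕ) - 1 < m + 3 := by omega
  by_cases hi : (i : ℕ) = 0 <;> by_cases hj : (j : ℕ) = 0
  · exact Fin.ext (by omega)
  · rw [f1_zero σ i hi, f1_val σ j hj hkj] at hv; omega
  · rw [f1_val σ i hi hki, f1_zero σ j hj] at hv; omega
  · rw [f1_val σ i hi hki, f1_val σ j hj hkj] at hv
    have := perm_val_inj σ hki hkj (by omega)
    exact Fin.ext (by omega)

noncomputable def ext1 (σ : Equiv.Perm (Fin (m+3))) : Equiv.Perm (Fin (m+4)) :=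
  Equiv.ofBijective (f1 σ) (Finite.injective_iff_bijective.mp (f1_inj σ))

lemma ext1_apply (σ : Equiv.Perm (Fin (m+3))) (i : Fin (m+4)) : ext1 σ i = f1 σ i := rfl

lemma ext1_mem (σ : Vsub (m+3)) :
    IsKBounded 2 (m+4) (ext1 σ.val) ∧ IsAnchored (m+4) (ext1 σ.val) := by
  obtain ⟨σ, hbσ, haσ⟩ := σ
  simp only
  constructor
  · intro i j hij
    simp only [ext1_apply]
    have hj0 : (j : ℕ) ≠ 0 := by omega
    have hkj : (j : ℕ) - 1 < m + 3 := by omega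
    have e2 := f1_val σ j hj0 hkj
    by_cases hi : (i : ℕ) = 0
    · have e1 := f1_zero σ i hi
      have h0' : 0 < m + 3 := by omega
      have e3 : (σ ⟨(j : ℕ) - 1, hkj⟩ : ℕ) = (σ ⟨0, h0'⟩ : ℕ) :=
        perm_val_congr σ hkj h0' (by omega)
      have e4 := anchored_zero haσ h0'
      omega
    · have hki : (i : ℕ) - 1 < m + 3 := by omega
      have e1 := f1_val σ i hi hki
      have e3 := hbσ ⟨(i:ℕ) - 1, hki⟩ ⟨(j:ℕ) - 1, hkj⟩ (by simp; omega)
      omega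
  · intro i
    constructor
    · intro h
      refine Fin.ext ?_
      rw [show ((ext1 σ i : Fin (m+4)) : ℕ) = (f1 σ i : ℕ) from rfl, f1_zero σ i h]
      omega
    · intro h
      have h' : (i : ℕ) = m + 3 := by omega
      refine Fin.ext ?_
      have hk : (i : ℕ) - 1 < m + 3 := by omega
      have e1 : ((ext1 σ i : Fin (m+4)) : ℕ) = (σ ⟨(i:ℕ) - 1, hk⟩ : ℕ) + 1 :=
        f1_val σ i (by omega) hk
      have e2 : (σ ⟨(i:ℕ) - 1, hk⟩ : ℕ) = m + 2 := by
        have := anchored_last haσ hk (by omega)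
        omega
      omega

noncomputable def g1 (σ : Vsub (m+3)) : {x : Vsub (m+4) // (x.val ⟨1, by omega⟩ : ℕ) = 1} :=
  ⟨⟨ext1 σ.val, ext1_mem σ⟩, by
    obtain ⟨σ, hbσ, haσ⟩ := σ
    simp only
    have h1 : (1:ℕ) < m + 4 := by omega
    have h0' : 0 < m + 3 := by omega
    show ((ext1 σ ⟨1, h1⟩ : Fin (m+4)) : ℕ) = 1
    have e1 : ((ext1 σ ⟨1, h1⟩ : Fin (m+4)) : ℕ) = (σ ⟨0, h0'⟩ : ℕ) + 1 :=
      f1_val σ ⟨1, h1⟩ (by simp) h0'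
    rw [e1, anchored_zero haσ h0']⟩

lemma g1_inj : Function.Injective (g1 (m := m)) := by
  intro σ τ h
  have h2 : ext1 σ.val = ext1 τ.val := congrArg (fun z => z.val.val) h
  refine Subtype.ext (Equiv.ext fun i => ?_)
  have hlt : (i : ℕ) + 1 < m + 4 := by omega
  have hk : (i : ℕ) + 1 - 1 < m + 3 := by omega
  have hvs : ((ext1 σ.val ⟨(i:ℕ)+1, hlt⟩ : Fin (m+4)) : ℕ) = (σ.val ⟨(i:ℕ)+1-1, hk⟩ : ℕ) + 1 :=
    f1_val σ.val ⟨(i:ℕ)+1, hlt⟩ (by simp) hk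
  have hvt : ((ext1 τ.val ⟨(i:ℕ)+1, hlt⟩ : Fin (m+4)) : ℕ) = (τ.val ⟨(i:ℕ)+1-1, hk⟩ : ℕ) + 1 :=
    f1_val τ.val ⟨(i:ℕ)+1, hlt⟩ (by simp) hk
  have hv : (σ.val ⟨(i:ℕ)+1-1, hk⟩ : ℕ) + 1 = (τ.val ⟨(i:ℕ)+1-1, hk⟩ : ℕ) + 1 := by
    rw [← hvs, ← hvt, h2]
  have : (i:ℕ) + 1 - 1 = (i:ℕ) := by omega
  have e1 : (σ.val ⟨(i:ℕ)+1-1, hk⟩ : ℕ) = (σ.val i : ℕ) := by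
    conv_rhs => rw [← Fin.eta i i.isLt]
    exact perm_val_congr σ.val hk i.isLt this
  have e2 : (τ.val ⟨(i:ℕ)+1-1, hk⟩ : ℕ) = (τ.val i : ℕ) := by
    conv_rhs => rw [← Fin.eta i i.isLt]
    exact perm_val_congr τ.val hk i.isLt this
  exact Fin.ext (by omega)
end ext1

section surj1
variable {m : ℕ}

lemma val_pos {n : ℕ} {π : Equiv.Perm (Fin n)} (ha : IsAnchored n π)
    {i : ℕ} (hi : i < n) (hne : i ≠ 0) : 1 ≤ (π ⟨i, hi⟩ : ℕ) := by
  by_contra h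
  have h0 : (π ⟨0, by omega⟩ : ℕ) = 0 := anchored_zero ha (by omega)
  have := perm_val_inj π hi (by omega : 0 < n) (by omega)
  omega

lemma g1_surj : Function.Surjective (g1 (m := m)) := by
  rintro ⟨⟨π, hbπ, haπ⟩, hx1⟩
  have h1lt : (1:ℕ) < m + 4 := by omega
  have hx1' : (π ⟨1, h1lt⟩ : ℕ) = 1 := hx1
  -- the restriction function
  have hr : ∀ i : Fin (m+3), (π ⟨(i:ℕ)+1, by omega⟩ : ℕ) - 1 < m + 3 := by
    intro i
    have := (π ⟨(i:ℕ)+1, by omega⟩).isLt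
    omega
  set r : Fin (m+3) → Fin (m+3) := fun i => ⟨(π ⟨(i:ℕ)+1, by omega⟩ : ℕ) - 1, hr i⟩ with hrdef
  have r_val : ∀ (i : Fin (m+3)) (h : (i:ℕ)+1 < m+4), (r i : ℕ) = (π ⟨(i:ℕ)+1, h⟩ : ℕ) - 1 :=
    fun i h => rfl
  have r_inj : Function.Injective r := by
    intro i j hij
    have hi4 : (i:ℕ)+1 < m+4 := by omega
    have hj4 : (j:ℕ)+1 < m+4 := by omega
    have hv := congrArg Fin.val hij
    rw [r_val i hi4, r_val j hj4] at hv
    have hpi := val_pos haπ hi4 (by omega)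
    have hpj := val_pos haπ hj4 (by omega)
    have := perm_val_inj π hi4 hj4 (by omega)
    exact Fin.ext (by omega)
  set σ : Equiv.Perm (Fin (m+3)) :=
    Equiv.ofBijective r (Finite.injective_iff_bijective.mp r_inj) with hσdef
  have σ_val : ∀ (i : Fin (m+3)) (h : (i:ℕ)+1 < m+4), (σ i : ℕ) = (π ⟨(i:ℕ)+1, h⟩ : ℕ) - 1 :=
    fun i h => rfl
  have hbσ : IsKBounded 2 (m+3) σ := by
    intro i j hij
    have hi4 : (i:ℕ)+1 < m+4 := by omega
    have hj4 : (j:ℕ)+1 < m+4 := by omega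
    have e1 := σ_val i hi4
    have e2 := σ_val j hj4
    have hpi := val_pos haπ hi4 (by omega)
    have hpj := val_pos haπ hj4 (by omega)
    have e3 := hbπ ⟨(i:ℕ)+1, hi4⟩ ⟨(j:ℕ)+1, hj4⟩ (by simp; omega)
    omega
  have haσ : IsAnchored (m+3) σ := by
    intro i
    constructor
    · intro h
      have hi4 : (i:ℕ)+1 < m+4 := by omega
      refine Fin.ext ?_
      rw [σ_val i hi4]
      have e1 : (π ⟨(i:ℕ)+1, hi4⟩ : ℕ) = (π ⟨1, h1lt⟩ : ℕ) := perm_val_congr π hi4 h1lt (by omega)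
      omega
    · intro h
      have h' : (i : ℕ) = m + 2 := by omega
      have hi4 : (i:ℕ)+1 < m+4 := by omega
      refine Fin.ext ?_
      rw [σ_val i hi4]
      have e1 : (π ⟨(i:ℕ)+1, hi4⟩ : ℕ) = m + 3 := by
        have := anchored_last haπ hi4 (by omega)
        omega
      omega
  refine ⟨⟨σ, hbσ, haσ⟩, ?_⟩
  refine Subtype.ext (Subtype.ext (Equiv.ext fun i => Fin.ext ?_))
  show (f1 σ i : ℕ) = (π i : ℕ)
  by_cases hi : (i : ℕ) = 0
  · rw [f1_zero σ i hi]
    have h0 : (π ⟨0, by omega⟩ : ℕ) = 0 := anchored_zero haπ (by omega)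
    have : (π i : ℕ) = (π ⟨0, by omega⟩ : ℕ) := by
      conv_lhs => rw [← Fin.eta i i.isLt]
      exact perm_val_congr π i.isLt (by omega) hi
    omega
  · have hk : (i:ℕ) - 1 < m + 3 := by omega
    rw [f1_val σ i hi hk]
    have hi4 : ((⟨(i:ℕ)-1, hk⟩ : Fin (m+3)) : ℕ) + 1 < m+4 := by
      simp; omega
    rw [σ_val ⟨(i:ℕ)-1, hk⟩ hi4]
    have hpos : 1 ≤ (π ⟨((⟨(i:ℕ)-1, hk⟩ : Fin (m+3)) : ℕ) + 1, hi4⟩ : ℕ) :=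
      val_pos haπ hi4 (by simp)
    have e1 : (π ⟨((⟨(i:ℕ)-1, hk⟩ : Fin (m+3)) : ℕ) + 1, hi4⟩ : ℕ) = (π i : ℕ) := by
      conv_rhs => rw [← Fin.eta i i.isLt]
      exact perm_val_congr π hi4 i.isLt (by simp; omega)
    omega

end surj1

section ext3
variable {m : ℕ}

/-- extension for case π(1)=2 : prefix 0,2,1,3 -/
def f3 (σ : Equiv.Perm (Fin (m+1))) : Fin (m+4) → Fin (m+4) := fun i =>
  if h0 : (i : ℕ) = 0 then ⟨0, by omega⟩
  else if h1 : (i : ℕ) = 1 then ⟨2, by omega⟩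
  else if h2 : (i : ℕ) = 2 then ⟨1, by omega⟩
  else Fin.cast (by omega) ((σ ⟨(i : ℕ) - 3, by omega⟩).addNat 3)

lemma f3_zero (σ : Equiv.Perm (Fin (m+1))) (i : Fin (m+4)) (h : (i : ℕ) = 0) :
    (f3 σ i : ℕ) = 0 := by simp [f3, h]

lemma f3_one (σ : Equiv.Perm (Fin (m+1))) (i : Fin (m+4)) (h : (i : ℕ) = 1) :
    (f3 σ i : ℕ) = 2 := by simp [f3, h]

lemma f3_two (σ : Equiv.Perm (Fin (m+1))) (i : Fin (m+4)) (h : (i : ℕ) = 2) :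
    (f3 σ i : ℕ) = 1 := by simp [f3, h]

lemma f3_val (σ : Equiv.Perm (Fin (m+1))) (i : Fin (m+4)) (h0 : (i : ℕ) ≠ 0)
    (h1 : (i : ℕ) ≠ 1) (h2 : (i : ℕ) ≠ 2) (hk : (i : ℕ) - 3 < m + 1) :
    (f3 σ i : ℕ) = (σ ⟨(i : ℕ) - 3, hk⟩ : ℕ) + 3 := by
  simp [f3, h0, h1, h2]

lemma f3_cases (σ : Equiv.Perm (Fin (m+1))) (i : Fin (m+4)) :
    ((i : ℕ) = 0 ∧ (f3 σ i : ℕ) = 0) ∨ ((i : ℕ) = 1 ∧ (f3 σ i : ℕ) = 2) ∨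
    ((i : ℕ) = 2 ∧ (f3 σ i : ℕ) = 1) ∨
    (3 ≤ (i : ℕ) ∧ ∃ hk : (i : ℕ) - 3 < m + 1, (f3 σ i : ℕ) = (σ ⟨(i : ℕ) - 3, hk⟩ : ℕ) + 3) := by
  by_cases h0 : (i : ℕ) = 0
  · exact Or.inl ⟨h0, f3_zero σ i h0⟩
  by_cases h1 : (i : ℕ) = 1
  · exact Or.inr (Or.inl ⟨h1, f3_one σ i h1⟩)
  by_cases h2 : (i : ℕ) = 2
  · exact Or.inr (Or.inr (Or.inl ⟨h2, f3_two σ i h2⟩))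
  have hk : (i : ℕ) - 3 < m + 1 := by omega
  exact Or.inr (Or.inr (Or.inr ⟨by omega, hk, f3_val σ i h0 h1 h2 hk⟩))

lemma f3_inj (σ : Equiv.Perm (Fin (m+1))) : Function.Injective (f3 σ) := by
  intro i j hij
  have hv := congrArg Fin.val hij
  refine Fin.ext ?_
  rcases f3_cases σ i with ⟨h, e⟩ | ⟨h, e⟩ | ⟨h, e⟩ | ⟨h, hk, e⟩ <;>
    rcases f3_cases σ j with ⟨h', e'⟩ | ⟨h', e'⟩ | ⟨h', e'⟩ | ⟨h', hk', e'⟩ <;>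
    try omega
  have := perm_val_inj σ hk hk' (by omega)
  omega

noncomputable def ext3 (σ : Equiv.Perm (Fin (m+1))) : Equiv.Perm (Fin (m+4)) :=
  Equiv.ofBijective (f3 σ) (Finite.injective_iff_bijective.mp (f3_inj σ))

lemma ext3_mem (σ : Vsub (m+1)) :
    IsKBounded 2 (m+4) (ext3 σ.val) ∧ IsAnchored (m+4) (ext3 σ.val) := by
  obtain ⟨σ, hbσ, haσ⟩ := σ
  simp only
  have h0' : 0 < m + 1 := by omega
  have e4 := anchored_zero haσ h0'
  constructor
  · intro i j hij
    show ((((f3 σ j : Fin (m+4)) : ℕ) : ℤ) - (((f3 σ i : Fin (m+4)) : ℕ) : ℤ)).natAbs ≤ 2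
    by_cases hi0 : (i : ℕ) = 0
    · rw [f3_zero σ i hi0, f3_one σ j (by omega)]
      simp
    by_cases hi1 : (i : ℕ) = 1
    · rw [f3_one σ i hi1, f3_two σ j (by omega)]
      simp
    by_cases hi2 : (i : ℕ) = 2
    · have hkj : (j:ℕ) - 3 < m + 1 := by omega
      have e1 := f3_val σ j (by omega) (by omega) (by omega) hkj
      have e5 : (σ ⟨(j:ℕ)-3, hkj⟩ : ℕ) = (σ ⟨0, h0'⟩ : ℕ) := perm_val_congr σ hkj h0' (by omega)
      rw [f3_two σ i hi2, e1, e5, e4]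
      simp
    · have hki : (i : ℕ) - 3 < m + 1 := by omega
      have hkj : (j : ℕ) - 3 < m + 1 := by omega
      rw [f3_val σ i hi0 hi1 hi2 hki, f3_val σ j (by omega) (by omega) (by omega) hkj]
      have e3 := hbσ ⟨(i:ℕ) - 3, hki⟩ ⟨(j:ℕ) - 3, hkj⟩ (by simp; omega)
      omega
  · intro i
    constructor
    · intro h
      refine Fin.ext ?_
      rw [show ((ext3 σ i : Fin (m+4)) : ℕ) = (f3 σ i : ℕ) from rfl, f3_zero σ i h]
      omega
    · intro h
      have h' : (i : ℕ) = m + 3 := by omega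
      refine Fin.ext ?_
      have hk : (i : ℕ) - 3 < m + 1 := by omega
      have e1 : ((ext3 σ i : Fin (m+4)) : ℕ) = (σ ⟨(i:ℕ) - 3, hk⟩ : ℕ) + 3 :=
        f3_val σ i (by omega) (by omega) (by omega) hk
      have e2 : (σ ⟨(i:ℕ) - 3, hk⟩ : ℕ) = m := by
        have := anchored_last haσ hk (by omega)
        omega
      omega

noncomputable def g3 (σ : Vsub (m+1)) : {x : Vsub (m+4) // (x.val ⟨1, by omega⟩ : ℕ) = 2} :=
  ⟨⟨ext3 σ.val, ext3_mem σ⟩, by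
    obtain ⟨σ, hbσ, haσ⟩ := σ
    simp only
    have h1 : (1:ℕ) < m + 4 := by omega
    show ((ext3 σ ⟨1, h1⟩ : Fin (m+4)) : ℕ) = 2
    exact f3_one σ ⟨1, h1⟩ (by simp)⟩

lemma g3_inj : Function.Injective (g3 (m := m)) := by
  intro σ τ h
  have h2 : ext3 σ.val = ext3 τ.val := congrArg (fun z => z.val.val) h
  refine Subtype.ext (Equiv.ext fun i => ?_)
  have hlt : (i : ℕ) + 3 < m + 4 := by omega
  have hk : (i : ℕ) + 3 - 3 < m + 1 := by omega
  have hvs : ((ext3 σ.val ⟨(i:ℕ)+3, hlt⟩ : Fin (m+4)) : ℕ) = (σ.val ⟨(i:ℕ)+3-3, hk⟩ : ℕ) + 3 :=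
    f3_val σ.val ⟨(i:ℕ)+3, hlt⟩ (by simp) (by simp) (by simp) hk
  have hvt : ((ext3 τ.val ⟨(i:ℕ)+3, hlt⟩ : Fin (m+4)) : ℕ) = (τ.val ⟨(i:ℕ)+3-3, hk⟩ : ℕ) + 3 :=
    f3_val τ.val ⟨(i:ℕ)+3, hlt⟩ (by simp) (by simp) (by simp) hk
  have hv : (σ.val ⟨(i:ℕ)+3-3, hk⟩ : ℕ) + 3 = (τ.val ⟨(i:ℕ)+3-3, hk⟩ : ℕ) + 3 := by
    rw [← hvs, ← hvt, h2]
  have hidx : (i:ℕ) + 3 - 3 = (i:ℕ) := by omega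
  have e1 : (σ.val ⟨(i:ℕ)+3-3, hk⟩ : ℕ) = (σ.val i : ℕ) := by
    conv_rhs => rw [← Fin.eta i i.isLt]
    exact perm_val_congr σ.val hk i.isLt hidx
  have e2 : (τ.val ⟨(i:ℕ)+3-3, hk⟩ : ℕ) = (τ.val i : ℕ) := by
    conv_rhs => rw [← Fin.eta i i.isLt]
    exact perm_val_congr τ.val hk i.isLt hidx
  exact Fin.ext (by omega)

lemma g3_surj : Function.Surjective (g3 (m := m)) := by
  rintro ⟨⟨π, hbπ, haπ⟩, hx1⟩
  have h1lt : (1:ℕ) < m + 4 := by omega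
  have h2lt : (2:ℕ) < m + 4 := by omega
  have h3lt : (3:ℕ) < m + 4 := by omega
  have h0lt : (0:ℕ) < m + 4 := by omega
  have hx1' : (π ⟨1, h1lt⟩ : ℕ) = 2 := hx1
  have hstr := case2_struct (m := m) ⟨π, hbπ, haπ⟩ hx1
  have hx2' : (π ⟨2, h2lt⟩ : ℕ) = 1 := hstr.1
  have hx3' : (π ⟨3, h3lt⟩ : ℕ) = 3 := hstr.2
  have h0 : (π ⟨0, h0lt⟩ : ℕ) = 0 := anchored_zero haπ h0lt
  have hpos : ∀ (i : ℕ) (hi : i < m+4), 3 ≤ i → 3 ≤ (π ⟨i, hi⟩ : ℕ) := by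
    intro i hi h3
    by_contra hlt
    have hc : (π ⟨i, hi⟩ : ℕ) = 0 ∨ (π ⟨i, hi⟩ : ℕ) = 1 ∨ (π ⟨i, hi⟩ : ℕ) = 2 := by omega
    rcases hc with hc | hc | hc
    · have := perm_val_inj π hi h0lt (by omega)
      omega
    · have := perm_val_inj π hi h2lt (by omega)
      omega
    · have := perm_val_inj π hi h1lt (by omega)
      omega
  have hr : ∀ i : Fin (m+1), (π ⟨(i:ℕ)+3, by omega⟩ : ℕ) - 3 < m + 1 := by
    intro i
    have := (π ⟨(i:ℕ)+3, by omega⟩).isLt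
    omega
  set r : Fin (m+1) → Fin (m+1) := fun i => ⟨(π ⟨(i:ℕ)+3, by omega⟩ : ℕ) - 3, hr i⟩ with hrdef
  have r_val : ∀ (i : Fin (m+1)) (h : (i:ℕ)+3 < m+4), (r i : ℕ) = (π ⟨(i:ℕ)+3, h⟩ : ℕ) - 3 :=
    fun i h => rfl
  have r_inj : Function.Injective r := by
    intro i j hij
    have hi4 : (i:ℕ)+3 < m+4 := by omega
    have hj4 : (j:ℕ)+3 < m+4 := by omega
    have hv := congrArg Fin.val hij
    rw [r_val i hi4, r_val j hj4] at hv
    have hpi := hpos ((i:ℕ)+3) hi4 (by omega)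
    have hpj := hpos ((j:ℕ)+3) hj4 (by omega)
    have := perm_val_inj π hi4 hj4 (by omega)
    exact Fin.ext (by omega)
  set σ : Equiv.Perm (Fin (m+1)) :=
    Equiv.ofBijective r (Finite.injective_iff_bijective.mp r_inj) with hσdef
  have σ_val : ∀ (i : Fin (m+1)) (h : (i:ℕ)+3 < m+4), (σ i : ℕ) = (π ⟨(i:ℕ)+3, h⟩ : ℕ) - 3 :=
    fun i h => rfl
  have hbσ : IsKBounded 2 (m+1) σ := by
    intro i j hij
    have hi4 : (i:ℕ)+3 < m+4 := by omega
    have hj4 : (j:ℕ)+3 < m+4 := by omega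
    have e1 := σ_val i hi4
    have e2 := σ_val j hj4
    have hpi := hpos ((i:ℕ)+3) hi4 (by omega)
    have hpj := hpos ((j:ℕ)+3) hj4 (by omega)
    have e3 := hbπ ⟨(i:ℕ)+3, hi4⟩ ⟨(j:ℕ)+3, hj4⟩ (by simp; omega)
    omega
  have haσ : IsAnchored (m+1) σ := by
    intro i
    constructor
    · intro h
      have hi4 : (i:ℕ)+3 < m+4 := by omega
      refine Fin.ext ?_
      rw [σ_val i hi4]
      have e1 : (π ⟨(i:ℕ)+3, hi4⟩ : ℕ) = (π ⟨3, h3lt⟩ : ℕ) := perm_val_congr π hi4 h3lt (by omega)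
      omega
    · intro h
      have h' : (i : ℕ) = m := by omega
      have hi4 : (i:ℕ)+3 < m+4 := by omega
      refine Fin.ext ?_
      rw [σ_val i hi4]
      have e1 : (π ⟨(i:ℕ)+3, hi4⟩ : ℕ) = m + 3 := by
        have := anchored_last haπ hi4 (by omega)
        omega
      omega
  refine ⟨⟨σ, hbσ, haσ⟩, ?_⟩
  refine Subtype.ext (Subtype.ext (Equiv.ext fun i => Fin.ext ?_))
  show (f3 σ i : ℕ) = (π i : ℕ)
  have hπi : ∀ (v : ℕ) (hv : v < m+4), (i : ℕ) = v → (π i : ℕ) = (π ⟨v, hv⟩ : ℕ) := by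
    intro v hv hiv
    conv_lhs => rw [← Fin.eta i i.isLt]
    exact perm_val_congr π i.isLt hv hiv
  by_cases hi0 : (i : ℕ) = 0
  · rw [f3_zero σ i hi0, hπi 0 h0lt hi0]
    omega
  by_cases hi1 : (i : ℕ) = 1
  · rw [f3_one σ i hi1, hπi 1 h1lt hi1]
    omega
  by_cases hi2 : (i : ℕ) = 2
  · rw [f3_two σ i hi2, hπi 2 h2lt hi2]
    omega
  · have hk : (i:ℕ) - 3 < m + 1 := by omega
    rw [f3_val σ i hi0 hi1 hi2 hk]
    have hi4 : ((⟨(i:ℕ)-3, hk⟩ : Fin (m+1)) : ℕ) + 3 < m+4 := by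
      simp; omega
    rw [σ_val ⟨(i:ℕ)-3, hk⟩ hi4]
    have hp : 3 ≤ (π ⟨((⟨(i:ℕ)-3, hk⟩ : Fin (m+1)) : ℕ) + 3, hi4⟩ : ℕ) :=
      hpos _ hi4 (by omega)
    have e1 : (π ⟨((⟨(i:ℕ)-3, hk⟩ : Fin (m+1)) : ℕ) + 3, hi4⟩ : ℕ) = (π i : ℕ) := by
      conv_rhs => rw [← Fin.eta i i.isLt]
      exact perm_val_congr π hi4 i.isLt (by simp; omega)
    omega

end ext3

instance (k n : ℕ) : DecidablePred (IsKBounded k n) := fun _ => by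
  unfold IsKBounded; infer_instance

instance (n : ℕ) : DecidablePred (IsAnchored n) := fun _ => by
  unfold IsAnchored; infer_instance

section assemble
variable {m : ℕ}

lemma card_g1' : Nat.card (Vsub (m+3)) =
    Nat.card {x : Vsub (m+4) // (x.val ⟨1, by omega⟩ : ℕ) = 1} :=
  Nat.card_eq_of_bijective g1 ⟨g1_inj, g1_surj⟩

lemma card_g3' : Nat.card (Vsub (m+1)) =
    Nat.card {x : Vsub (m+4) // (x.val ⟨1, by omega⟩ : ℕ) = 2} :=
  Nat.card_eq_of_bijective g3 ⟨g3_inj, g3_surj⟩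

lemma card_split : Nat.card (Vsub (m+4)) =
    Nat.card {x : Vsub (m+4) // (x.val ⟨1, by omega⟩ : ℕ) = 1} +
    Nat.card {x : Vsub (m+4) // (x.val ⟨1, by omega⟩ : ℕ) = 2} := by
  classical
  have h1lt : (1:ℕ) < m + 4 := by omega
  have e : Vsub (m+4) ≃
      ({x : Vsub (m+4) // (x.val ⟨1, h1lt⟩ : ℕ) = 1} ⊕
        {x : Vsub (m+4) // ¬ (x.val ⟨1, h1lt⟩ : ℕ) = 1}) :=
    (Equiv.sumCompl _).symm
  have e2 : {x : Vsub (m+4) // ¬ (x.val ⟨1, h1lt⟩ : ℕ) = 1} ≃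
      {x : Vsub (m+4) // (x.val ⟨1, h1lt⟩ : ℕ) = 2} :=
    Equiv.subtypeEquivRight (fun x => by
      rcases val_one' x h1lt with h | h <;> constructor <;> intro h' <;> omega)
  have key : Nat.card (Vsub (m+4)) =
      Nat.card {x : Vsub (m+4) // (x.val ⟨1, h1lt⟩ : ℕ) = 1} +
      Nat.card {x : Vsub (m+4) // (x.val ⟨1, h1lt⟩ : ℕ) = 2} := by
    rw [Nat.card_congr e, Nat.card_sum, Nat.card_congr e2]
  exact key

lemma main_rec : numAnchored 2 (m+4) = numAnchored 2 (m+3) + numAnchored 2 (m+1) := by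
  show Nat.card (Vsub (m+4)) = Nat.card (Vsub (m+3)) + Nat.card (Vsub (m+1))
  rw [card_split, card_g1', card_g3']

end assemble

theorem two_bounded_anchored_recurrence :
    numAnchored 2 1 = 1 ∧ numAnchored 2 2 = 1 ∧ numAnchored 2 3 = 1 ∧
    ∀ n : ℕ, 4 ≤ n → numAnchored 2 n = numAnchored 2 (n - 1) + numAnchored 2 (n - 3) := by
  refine ⟨?_, ?_, ?_, ?_⟩
  · rw [numAnchored, Nat.card_eq_fintype_card]; decide
  · rw [numAnchored, Nat.card_eq_fintype_card]; decide
  · rw [numAnchored, Nat.card_eq_fintype_card]; decide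
  · intro n hn
    obtain ⟨m, rfl⟩ : ∃ m, n = m + 4 := ⟨n - 4, by omega⟩
    exact main_rec
end main
end

section
/- Let π be a 2-bounded anchored permutation of [n]. Then there exists a subset I ⊆ {2,...,n-2} such that (1) any two distinct elements of I differ by at least 3, and (2) for all i ∈ [n], π(i) = i+1 if i ∈ I, π(i) = i-1 if i-1 ∈ I, and π(i) = i otherwise. -/
section Aux
variable {n : ℕ} (π : Equiv.Perm (Fin n))

private lemma back_aux (a : ℕ) (hf : ∀ j : Fin n, (j : ℕ) < a → (π j : ℕ) < a) :
    ∀ j : Fin n, (π j : ℕ) < a → (j : ℕ) < a := by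
  classical
  intro j hj
  set S : Finset (Fin n) := Finset.univ.filter (fun j => (j : ℕ) < a) with hS
  have hsub : S.image π ⊆ S := by
    intro x hx
    simp only [hS, Finset.mem_image, Finset.mem_filter, Finset.mem_univ, true_and] at hx ⊢
    obtain ⟨y, hy, rfl⟩ := hx
    exact hf y hy
  have hcard : S.card ≤ (S.image π).card := by
    rw [Finset.card_image_of_injective _ π.injective]
  have heq : S.image π = S := Finset.eq_of_subset_of_card_le hsub hcard
  have hjS : π j ∈ S := by simp [hS, hj]
  rw [← heq] at hjS
  simp only [Finset.mem_image] at hjS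
  obtain ⟨y, hy, hyj⟩ := hjS
  have : y = j := π.injective hyj
  subst this
  simpa [hS] using hy

private lemma step (hb : IsKBounded 2 n π) (ha : IsAnchored n π) (a : ℕ) (hlt : a < n)
    (hC : ∀ j : Fin n, (j : ℕ) < a ↔ (π j : ℕ) < a) :
    ((π ⟨a, hlt⟩ : ℕ) = a ∧ ∀ j : Fin n, (j : ℕ) < a + 1 ↔ (π j : ℕ) < a + 1) ∨
    (∃ h1 : a + 1 < n, (π ⟨a, hlt⟩ : ℕ) = a + 1 ∧ (π ⟨a + 1, h1⟩ : ℕ) = a ∧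
      ∀ j : Fin n, (j : ℕ) < a + 2 ↔ (π j : ℕ) < a + 2) := by
  have hge : a ≤ (π ⟨a, hlt⟩ : ℕ) := by
    by_contra h
    have := (hC ⟨a, hlt⟩).2 (by omega)
    simp only at this
    omega
  have hle : (π ⟨a, hlt⟩ : ℕ) ≤ a + 1 := by
    rcases Nat.eq_zero_or_pos a with rfl | hpos
    · have h0 := (ha ⟨0, hlt⟩).1 rfl
      have := congrArg Fin.val h0
      simp only at this
      omega
    · have hprev : a - 1 < n := by omega
      have h1 : (π ⟨a - 1, hprev⟩ : ℕ) < a := (hC _).1 (by simp only ; omega)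
      have h2 := hb ⟨a - 1, hprev⟩ ⟨a, hlt⟩ (by simp only ; omega)
      omega
  rcases Nat.lt_or_ge (π ⟨a, hlt⟩ : ℕ) (a + 1) with hfix | hswap
  · -- fixed point case
    have hpa : (π ⟨a, hlt⟩ : ℕ) = a := by omega
    left
    refine ⟨hpa, ?_⟩
    have hf : ∀ j : Fin n, (j : ℕ) < a + 1 → (π j : ℕ) < a + 1 := by
      intro j hj
      rcases Nat.lt_or_ge (j : ℕ) a with h | h
      · have := (hC j).1 h; omega
      · have hvj : (π j : ℕ) = (π ⟨a, hlt⟩ : ℕ) :=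
          congrArg Fin.val (congrArg π (Fin.ext (show (j : ℕ) = a by omega)))
        omega
    exact fun j => ⟨hf j, fun h => back_aux π (a + 1) hf j h⟩
  · -- swap case
    have hpa : (π ⟨a, hlt⟩ : ℕ) = a + 1 := by omega
    have h1 : a + 1 < n := hpa ▸ (π ⟨a, hlt⟩).isLt
    right
    refine ⟨h1, hpa, ?_⟩
    set p : Fin n := π.symm ⟨a, hlt⟩ with hpdef
    have hp : (π p : ℕ) = a := by rw [hpdef, Equiv.apply_symm_apply]
    have hpge : a ≤ (p : ℕ) := by
      by_contra h
      have := (hC p).1 (by omega)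
      omega
    have hpne : (p : ℕ) ≠ a := by
      intro h
      have : p = ⟨a, hlt⟩ := Fin.ext h
      rw [this] at hp
      omega
    have hpeq : (p : ℕ) = a + 1 := by
      by_contra hne
      have hp2 : a + 2 ≤ (p : ℕ) := by omega
      have hplt : (p : ℕ) < n - 1 := by
        rcases Nat.lt_or_ge (p : ℕ) (n - 1) with h | h
        · exact h
        · have hpval : (p : ℕ) = n - 1 := by have := p.isLt; omega
          have := congrArg Fin.val ((ha p).2 hpval)
          omega
      have hq1lt : (p : ℕ) - 1 < n := by omega
      have hq2lt : (p : ℕ) + 1 < n := by omega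
      set q1 : Fin n := ⟨(p : ℕ) - 1, hq1lt⟩ with hq1def
      set q2 : Fin n := ⟨(p : ℕ) + 1, hq2lt⟩ with hq2def
      have key : ∀ q : Fin n, (q : ℕ) ≠ (p : ℕ) → a < (q : ℕ) →
          (((π p : ℕ) : ℤ) - ((π q : ℕ) : ℤ)).natAbs ≤ 2 → (π q : ℕ) = a + 2 := by
        intro q hqp hqa hbnd
        have hge' : a ≤ (π q : ℕ) := by
          by_contra h
          have := (hC q).2 (by omega)
          omega
        have hne1 : (π q : ℕ) ≠ a := by
          intro h
          have : π q = π p := Fin.ext (by omega)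
          exact hqp (congrArg Fin.val (π.injective this))
        have hne2 : (π q : ℕ) ≠ a + 1 := by
          intro h
          have : π q = π ⟨a, hlt⟩ := Fin.ext (by omega)
          have := congrArg Fin.val (π.injective this)
          simp only at this
          omega
        omega
      have hb1 := hb q1 p (by simp only [hq1def]; omega)
      have hb2 := hb p q2 (by simp only [hq2def])
      have e1 : (π q1 : ℕ) = a + 2 := key q1 (by simp only [hq1def]; omega) (by simp only [hq1def]; omega) hb1
      have e2 : (π q2 : ℕ) = a + 2 := key q2 (by simp only [hq2def]; omega) (by simp only [hq2def]; omega)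
        (by omega)
      have : q1 = q2 := π.injective (Fin.ext (by omega))
      have := congrArg Fin.val this
      simp only [hq1def, hq2def] at this
      omega
    have hpfin : p = ⟨a + 1, h1⟩ := Fin.ext hpeq
    have hswapval : (π ⟨a + 1, h1⟩ : ℕ) = a := by rw [← hpfin]; exact hp
    refine ⟨hswapval, ?_⟩
    have hf : ∀ j : Fin n, (j : ℕ) < a + 2 → (π j : ℕ) < a + 2 := by
      intro j hj
      rcases Nat.lt_or_ge (j : ℕ) a with h | h
      · have := (hC j).1 h; omega
      · rcases Nat.lt_or_ge (j : ℕ) (a + 1) with h' | h'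
        · have hvj : (π j : ℕ) = (π ⟨a, hlt⟩ : ℕ) :=
            congrArg Fin.val (congrArg π (Fin.ext (show (j : ℕ) = a by omega)))
          omega
        · have hvj : (π j : ℕ) = (π ⟨a + 1, h1⟩ : ℕ) :=
            congrArg Fin.val (congrArg π (Fin.ext (show (j : ℕ) = a + 1 by omega)))
          omega
    exact fun j => ⟨hf j, fun h => back_aux π (a + 2) hf j h⟩

end Aux

private def GoodAt {n : ℕ} (π : Equiv.Perm (Fin n)) (idx : Fin n) : Prop :=
  (π idx : ℕ) = (idx : ℕ) ∨
  (∃ h : (idx : ℕ) + 1 < n, (π idx : ℕ) = (idx : ℕ) + 1 ∧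
    (π ⟨(idx : ℕ) + 1, h⟩ : ℕ) = (idx : ℕ)) ∨
  (∃ h : (idx : ℕ) - 1 < n, 1 ≤ (idx : ℕ) ∧ (π idx : ℕ) = (idx : ℕ) - 1 ∧
    (π ⟨(idx : ℕ) - 1, h⟩ : ℕ) = (idx : ℕ))

private lemma main_aux {n : ℕ} (π : Equiv.Perm (Fin n)) (hb : IsKBounded 2 n π)
    (ha : IsAnchored n π) :
    ∀ m a : ℕ, n ≤ a + m → (∀ j : Fin n, (j : ℕ) < a ↔ (π j : ℕ) < a) →
      ∀ idx : Fin n, a ≤ (idx : ℕ) → GoodAt π idx := by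
  intro m
  induction m with
  | zero => intro a hm hC idx hidx; exact absurd idx.isLt (by omega)
  | succ m ih =>
    intro a hm hC idx hidx
    have hlt : a < n := lt_of_le_of_lt hidx idx.isLt
    rcases step π hb ha a hlt hC with ⟨hpa, hC1⟩ | ⟨h1, hpa, hswap, hC2⟩
    · rcases Nat.eq_or_lt_of_le hidx with heq | hgt
      · left
        have : idx = ⟨a, hlt⟩ := Fin.ext heq.symm
        rw [this]; omega
      · exact ih (a + 1) (by omega) hC1 idx (by omega)
    · rcases Nat.eq_or_lt_of_le hidx with heq | hgt
      · right; left
        have hidxa : idx = ⟨a, hlt⟩ := Fin.ext heq.symm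
        have hlt' : (idx : ℕ) + 1 < n := by omega
        refine ⟨hlt', ?_, ?_⟩
        · rw [hidxa]; omega
        · have heqf : (⟨(idx : ℕ) + 1, hlt'⟩ : Fin n) = ⟨a + 1, h1⟩ := by
            simp only [Fin.mk.injEq]; omega
          rw [heqf]; omega
      · rcases Nat.eq_or_lt_of_le hgt with heq' | hgt'
        · right; right
          have hlt' : (idx : ℕ) - 1 < n := by omega
          refine ⟨hlt', by omega, ?_, ?_⟩
          · have : idx = ⟨a + 1, h1⟩ := Fin.ext heq'.symm
            rw [this]; omega
          · have heqf : (⟨(idx : ℕ) - 1, hlt'⟩ : Fin n) = ⟨a, hlt⟩ := by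
              simp only [Fin.mk.injEq]; omega
            rw [heqf]; omega
        · exact ih (a + 2) (by omega) hC2 idx (by omega)

private lemma good_all {n : ℕ} (π : Equiv.Perm (Fin n)) (hb : IsKBounded 2 n π)
    (ha : IsAnchored n π) (idx : Fin n) : GoodAt π idx :=
  main_aux π hb ha n 0 (by omega) (by intro j; omega) idx (Nat.zero_le _)

private lemma swap_next {n : ℕ} (π : Equiv.Perm (Fin n)) (hb : IsKBounded 2 n π)
    (ha : IsAnchored n π) (idx : Fin n) (hπ : (π idx : ℕ) = (idx : ℕ) + 1) :
    ∃ h : (idx : ℕ) + 1 < n, (π ⟨(idx : ℕ) + 1, h⟩ : ℕ) = (idx : ℕ) := by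
  rcases good_all π hb ha idx with hfix | ⟨h, _, hpart⟩ | ⟨h, h1, hval, _⟩
  · omega
  · exact ⟨h, hpart⟩
  · omega

private lemma no_close {n : ℕ} (π : Equiv.Perm (Fin n)) (hb : IsKBounded 2 n π)
    (ha : IsAnchored n π) (a b : Fin n) (hπa : (π a : ℕ) = (a : ℕ) + 1)
    (hπb : (π b : ℕ) = (b : ℕ) + 1) (hab : (a : ℕ) < (b : ℕ)) :
    (a : ℕ) + 3 ≤ (b : ℕ) := by
  obtain ⟨h, hpart⟩ := swap_next π hb ha a hπa
  by_contra hcon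
  rcases Nat.lt_or_ge (b : ℕ) ((a : ℕ) + 2) with hb1 | hb2
  · -- b = a + 1
    have hbe : b = ⟨(a : ℕ) + 1, h⟩ := Fin.ext (show (b : ℕ) = (a : ℕ) + 1 by omega)
    have := congrArg Fin.val (congrArg π hbe)
    omega
  · -- b = a + 2
    have hbb := hb ⟨(a : ℕ) + 1, h⟩ b (show (b : ℕ) = (a : ℕ) + 1 + 1 by omega)
    omega


theorem two_bounded_structure (n : ℕ) (π : Equiv.Perm (Fin n))
    (hb : IsKBounded 2 n π) (ha : IsAnchored n π) :
    ∃ I : Finset ℕ,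
      (∀ i ∈ I, 2 ≤ i ∧ i + 2 ≤ n) ∧
      (∀ i ∈ I, ∀ j ∈ I, i ≠ j → 3 ≤ ((i : ℤ) - (j : ℤ)).natAbs) ∧
      (∀ idx : Fin n, (π idx : ℕ) + 1 =
        if (idx : ℕ) + 1 ∈ I then (idx : ℕ) + 2
        else if (idx : ℕ) ∈ I then (idx : ℕ)
        else (idx : ℕ) + 1) := by
  classical
  set I : Finset ℕ :=
    (Finset.univ.filter (fun idx : Fin n => (π idx : ℕ) = (idx : ℕ) + 1)).image
      (fun idx : Fin n => (idx : ℕ) + 1) with hI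
  have hmem : ∀ i : ℕ, i ∈ I ↔ ∃ idx : Fin n, (π idx : ℕ) = (idx : ℕ) + 1 ∧ (idx : ℕ) + 1 = i := by
    intro i
    simp only [hI, Finset.mem_image, Finset.mem_filter, Finset.mem_univ, true_and]
  refine ⟨I, ?_, ?_, ?_⟩
  · intro i hi
    obtain ⟨idx, hπ, rfl⟩ := (hmem i).1 hi
    have h1le : 1 ≤ (idx : ℕ) := by
      by_contra hcon
      have h0 := congrArg Fin.val ((ha idx).1 (by omega))
      omega
    obtain ⟨h, hpart⟩ := swap_next π hb ha idx hπ
    have hne : (idx : ℕ) + 1 ≠ n - 1 := by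
      intro he
      have hval : ((⟨(idx : ℕ) + 1, h⟩ : Fin n) : ℕ) = (idx : ℕ) + 1 := rfl
      have := congrArg Fin.val ((ha ⟨(idx : ℕ) + 1, h⟩).2 (by omega))
      omega
    constructor <;> omega
  · intro i hi j hj hij
    obtain ⟨a, hπa, rfl⟩ := (hmem i).1 hi
    obtain ⟨b, hπb, rfl⟩ := (hmem j).1 hj
    rcases Nat.lt_or_ge (a : ℕ) (b : ℕ) with h | h
    · have := no_close π hb ha a b hπa hπb h
      omega
    · have hlt : (b : ℕ) < (a : ℕ) := by
        rcases Nat.lt_or_ge (b : ℕ) (a : ℕ) with h' | h'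
        · exact h'
        · exact absurd (by omega : (a : ℕ) + 1 = (b : ℕ) + 1) hij
      have := no_close π hb ha b a hπb hπa hlt
      omega
  · intro idx
    rcases good_all π hb ha idx with hfix | ⟨h, hπ, hpart⟩ | ⟨h, h1, hπ, hpart⟩
    · have hc1 : (idx : ℕ) + 1 ∉ I := by
        intro hc
        obtain ⟨idx', hπ', heq⟩ := (hmem _).1 hc
        have : idx' = idx := Fin.ext (by omega)
        subst this
        omega
      have hc2 : (idx : ℕ) ∉ I := by
        intro hc
        obtain ⟨idx', hπ', heq⟩ := (hmem _).1 hc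
        have : π idx' = π idx := Fin.ext (by omega)
        have := congrArg Fin.val (π.injective this)
        omega
      rw [if_neg hc1, if_neg hc2]
      omega
    · have hc1 : (idx : ℕ) + 1 ∈ I := (hmem _).2 ⟨idx, hπ, rfl⟩
      rw [if_pos hc1]
      omega
    · have hc1 : (idx : ℕ) + 1 ∉ I := by
        intro hc
        obtain ⟨idx', hπ', heq⟩ := (hmem _).1 hc
        have : idx' = idx := Fin.ext (by omega)
        subst this
        omega
      have hcval : ((⟨(idx : ℕ) - 1, h⟩ : Fin n) : ℕ) = (idx : ℕ) - 1 := rfl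
      have hc2 : (idx : ℕ) ∈ I := (hmem _).2 ⟨⟨(idx : ℕ) - 1, h⟩, by omega, by omega⟩
      rw [if_neg hc1, if_pos hc2]
      omega
end

section
/- Conversely, for any subset I ⊆ {2,...,n-2} in which any two distinct elements differ by at least 3, the function π defined by π(i) = i+1 if i ∈ I, π(i) = i-1 if i-1 ∈ I, and π(i) = i otherwise, is a 2-bounded anchored permutation of [n]. -/
theorem two_bounded_structure_converse (n : ℕ) (I : Finset ℕ)
    (hI : ∀ i ∈ I, 2 ≤ i ∧ i + 2 ≤ n)
    (hsep : ∀ i ∈ I, ∀ j ∈ I, i ≠ j → 3 ≤ ((i : ℤ) - (j : ℤ)).natAbs) :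
    ∃ π : Equiv.Perm (Fin n),
      IsKBounded 2 n π ∧ IsAnchored n π ∧
      (∀ idx : Fin n, (π idx : ℕ) + 1 =
        if (idx : ℕ) + 1 ∈ I then (idx : ℕ) + 2
        else if (idx : ℕ) ∈ I then (idx : ℕ)
        else (idx : ℕ) + 1) := by
  classical
  -- the underlying function on ℕ
  set g : ℕ → ℕ := fun m => if m + 1 ∈ I then m + 1 else if m ∈ I then m - 1 else m with hg
  have hclose : ∀ i ∈ I, ∀ j ∈ I, i ≠ j → False ∨ True := fun _ _ _ _ _ => Or.inr trivial
  have hnear : ∀ i ∈ I, ∀ j ∈ I, ((i : ℤ) - j).natAbs < 3 → i = j := by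
    intro i hi j hj h
    by_contra hne
    exact absurd (hsep i hi j hj hne) (by omega)
  have hgg : ∀ m, g (g m) = m := by
    intro m
    by_cases h1 : m + 1 ∈ I
    · have h2 : m + 2 ∉ I := by
        intro h; have := hnear (m + 2) h (m + 1) h1 (by omega); omega
      simp only [hg, if_pos h1, if_neg h2, if_pos h1]
      omega
    · by_cases h2 : m ∈ I
      · have hm2 : 2 ≤ m := (hI m h2).1
        have : m - 1 + 1 = m := by omega
        simp only [hg, if_neg h1, if_pos h2, this, if_pos h2]
      · simp only [hg, if_neg h1, if_neg h2]
  have hlt : ∀ m, m < n → g m < n := by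
    intro m hm
    by_cases h1 : m + 1 ∈ I
    · have := (hI _ h1).2; simp only [hg, if_pos h1]; omega
    · by_cases h2 : m ∈ I
      · simp only [hg, if_neg h1, if_pos h2]; omega
      · simp only [hg, if_neg h1, if_neg h2]; exact hm
  -- values of g are within 1 of the argument
  have hrange : ∀ m, m - 1 ≤ g m ∧ g m ≤ m + 1 := by
    intro m
    by_cases h1 : m + 1 ∈ I
    · simp only [hg, if_pos h1]; omega
    · by_cases h2 : m ∈ I
      · simp only [hg, if_neg h1, if_pos h2]; omega
      · simp only [hg, if_neg h1, if_neg h2]; omega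
  have f : Fin n → Fin n := fun i => ⟨g i, hlt i i.isLt⟩
  have hinv : Function.Involutive (fun i : Fin n => (⟨g i, hlt i i.isLt⟩ : Fin n)) := by
    intro i; apply Fin.ext; exact hgg i
  refine ⟨hinv.toPerm _, ?_, ?_, ?_⟩
  · intro i j hij
    have hi : ((hinv.toPerm _) i : ℕ) = g i := rfl
    have hj : ((hinv.toPerm _) j : ℕ) = g j := rfl
    rw [hi, hj, hij]
    have h1 := hrange (i : ℕ)
    have h2 := hrange ((i : ℕ) + 1)
    -- exclude the case g i = i - 1 and g (i+1) = i + 2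
    by_cases hA : (i : ℕ) + 2 ∈ I
    · have hB : (i : ℕ) ∉ I := by
        intro h; have := hnear _ hA _ h (by omega); omega
      have hgi : g (i : ℕ) ≥ (i : ℕ) := by
        by_cases h1' : (i : ℕ) + 1 ∈ I
        · simp only [hg, if_pos h1']; omega
        · simp only [hg, if_neg h1', if_neg hB]; omega
      omega
    · have hgj : g ((i : ℕ) + 1) ≤ (i : ℕ) + 1 := by
        by_cases h2' : (i : ℕ) + 1 ∈ I
        · simp only [hg, if_neg hA, if_pos h2']; omega
        · simp only [hg, if_neg hA, if_neg h2']; omega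
      omega
  · intro i
    constructor
    · intro h0
      apply Fin.ext
      have : ((hinv.toPerm _) i : ℕ) = g i := rfl
      rw [this, h0]
      have h1 : (1 : ℕ) ∉ I := by intro h; have := (hI _ h).1; omega
      have h0' : (0 : ℕ) ∉ I := by intro h; have := (hI _ h).1; omega
      simp only [hg, if_neg, h1, h0']
      simp [h1, h0']
    · intro hl
      apply Fin.ext
      have : ((hinv.toPerm _) i : ℕ) = g i := rfl
      rw [this, hl]
      have hn := i.isLt
      have h1 : n - 1 + 1 ∉ I := by intro h; have := (hI _ h).2; omega
      have h2 : n - 1 ∉ I := by intro h; have := (hI _ h).2; omega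
      simp [hg, h1, h2]
  · intro idx
    have : ((hinv.toPerm _) idx : ℕ) = g idx := rfl
    rw [this]
    by_cases h1 : (idx : ℕ) + 1 ∈ I
    · simp [hg, h1]
    · by_cases h2 : (idx : ℕ) ∈ I
      · have := (hI _ h2).1
        simp only [hg, if_neg h1, if_pos h2]
        omega
      · simp [hg, h1, h2]
end

section
/- The number of 2-bounded anchored permutations of [n] equals the number of subsets I of {2,...,n-2} in which any two distinct elements differ by at least 3. -/
namespace TwoBounded

def Sparse (n : ℕ) (I : Finset ℕ) : Prop :=
  (∀ i ∈ I, 2 ≤ i ∧ i + 2 ≤ n) ∧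
  (∀ i ∈ I, ∀ j ∈ I, i ≠ j → 3 ≤ ((i : ℤ) - (j : ℤ)).natAbs)

def gfun (I : Finset ℕ) (x : ℕ) : ℕ :=
  if x + 1 ∈ I then x + 1 else if x ∈ I then x - 1 else x

section g
variable {n : ℕ} {I : Finset ℕ} (hS : Sparse n I)
include hS

lemma gap3 {a b : ℕ} (ha : a ∈ I) (hb : b ∈ I) (h : a < b) : a + 3 ≤ b := by
  have := hS.2 a ha b hb (by omega); omega

lemma ge2 {a : ℕ} (ha : a ∈ I) : 2 ≤ a := (hS.1 a ha).1

lemma le_n {a : ℕ} (ha : a ∈ I) : a + 2 ≤ n := (hS.1 a ha).2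

lemma not_succ_mem {a : ℕ} (ha : a ∈ I) : a + 1 ∉ I := fun h => by
  have := hS.2 a ha (a+1) h (by omega); omega

lemma not_succ2_mem {a : ℕ} (ha : a ∈ I) : a + 2 ∉ I := fun h => by
  have := hS.2 a ha (a+2) h (by omega); omega

lemma not_pred_mem {a : ℕ} (ha : a + 1 ∈ I) : a ∉ I := fun h => by
  have := hS.2 a h (a+1) ha (by omega); omega

lemma gfun_lt {x : ℕ} (hx : x < n) : gfun I x < n := by
  unfold gfun
  split_ifs with h1 h2
  · have := le_n hS h1; omega
  · have := ge2 hS h2; omega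
  · exact hx

lemma gfun_gfun (x : ℕ) : gfun I (gfun I x) = x := by
  by_cases h1 : x + 1 ∈ I
  · have h2 : x ∉ I := not_pred_mem hS h1
    have h3 : x + 2 ∉ I := not_succ_mem hS h1
    simp only [gfun, if_pos h1, if_neg h3]
    omega
  · by_cases h2 : x ∈ I
    · have hx2 : 2 ≤ x := ge2 hS h2
      have hx1 : x - 1 + 1 = x := by omega
      simp only [gfun, if_neg h1, if_pos h2, hx1]
    · simp only [gfun, if_neg h1, if_neg h2]

def sigmaPerm : Equiv.Perm (Fin n) :=
  Function.Involutive.toPerm (fun x => ⟨gfun I x, gfun_lt hS x.2⟩)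
    (fun x => Fin.ext (gfun_gfun hS x))

lemma sigmaPerm_apply (x : Fin n) : (sigmaPerm hS x : ℕ) = gfun I x := rfl

lemma sigmaPerm_bounded : IsKBounded 2 n (sigmaPerm hS) := by
  intro i j hji
  rw [sigmaPerm_apply, sigmaPerm_apply, hji]
  set x := (i : ℕ)
  by_cases h1 : x + 1 ∈ I
  · have h3 : x + 2 ∉ I := not_succ_mem hS h1
    simp only [gfun, if_pos h1, if_neg h3]
    omega
  · by_cases h2 : x ∈ I
    · have h3 : x + 2 ∉ I := not_succ2_mem hS h2
      have hx2 : 2 ≤ x := ge2 hS h2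
      simp only [gfun, if_neg h1, if_pos h2, if_neg h3]
      omega
    · by_cases h3 : x + 2 ∈ I
      · simp only [gfun, if_neg h1, if_neg h2, if_pos h3]
        omega
      · simp only [gfun, if_neg h1, if_neg h2, if_pos h3, if_neg h3]
        omega

lemma sigmaPerm_anchored : IsAnchored n (sigmaPerm hS) := by
  intro i
  constructor
  · intro h0
    apply Fin.ext
    rw [sigmaPerm_apply, h0]
    have h1 : (1 : ℕ) ∉ I := fun h => by have := ge2 hS h; omega
    have h2 : (0 : ℕ) ∉ I := fun h => by have := ge2 hS h; omega
    simp [gfun, h1, h2]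
  · intro hl
    apply Fin.ext
    rw [sigmaPerm_apply, hl]
    have hn : 1 ≤ n := by have := i.2; omega
    have h1 : n - 1 + 1 ∉ I := fun h => by have := le_n hS h; omega
    have h2 : n - 1 ∉ I := fun h => by have := le_n hS h; omega
    simp [gfun, h1, h2]

end g

def extract (n : ℕ) (π : Equiv.Perm (Fin n)) : Finset ℕ :=
  ((Finset.univ : Finset (Fin n)).filter (fun j => (π j : ℕ) = (j : ℕ) + 1)).image
    (fun j : Fin n => (j : ℕ) + 1)

lemma mem_extract_iff {n : ℕ} {π : Equiv.Perm (Fin n)} {i : ℕ} :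
    i ∈ extract n π ↔ ∃ k : ℕ, ∃ hk : k < n, (π ⟨k, hk⟩ : ℕ) = k + 1 ∧ i = k + 1 := by
  simp only [extract, Finset.mem_image, Finset.mem_filter, Finset.mem_univ, true_and]
  constructor
  · rintro ⟨j, hj, rfl⟩
    exact ⟨(j : ℕ), j.2, by simpa using hj, rfl⟩
  · rintro ⟨k, hk, h, rfl⟩
    exact ⟨⟨k, hk⟩, h, rfl⟩

section classify
variable {n : ℕ} {π : Equiv.Perm (Fin n)}
  (hb : IsKBounded 2 n π) (ha : IsAnchored n π)

/-- `π` as a function on `ℕ` (identity outside `[0,n)`). -/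
def pfun (n : ℕ) (π : Equiv.Perm (Fin n)) (k : ℕ) : ℕ :=
  if h : k < n then (π ⟨k, h⟩ : ℕ) else k

lemma pfun_lt {k : ℕ} (hk : k < n) : pfun n π k < n := by
  rw [pfun, dif_pos hk]; exact (π ⟨k, hk⟩).2

lemma pfun_inj {a b : ℕ} (ha' : a < n) (hb' : b < n) (h : pfun n π a = pfun n π b) :
    a = b := by
  rw [pfun, dif_pos ha', pfun, dif_pos hb'] at h
  have := π.injective (Fin.ext h)
  exact congrArg Fin.val this

include ha in
lemma pfun_zero (hn : 0 < n) : pfun n π 0 = 0 := by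
  rw [pfun, dif_pos hn]
  have := (ha ⟨0, hn⟩).1 rfl
  rw [this]

include ha in
lemma pfun_last (hn : 0 < n) : pfun n π (n - 1) = n - 1 := by
  have h : n - 1 < n := by omega
  rw [pfun, dif_pos h]
  have := (ha ⟨n - 1, h⟩).2 rfl
  rw [this]

include hb in
lemma pfun_bdd {k : ℕ} (hk : k + 1 < n) :
    pfun n π (k + 1) ≤ pfun n π k + 2 ∧ pfun n π k ≤ pfun n π (k + 1) + 2 := by
  have hk' : k < n := by omega
  have := hb ⟨k, hk'⟩ ⟨k + 1, hk⟩ rfl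
  rw [pfun, dif_pos hk, pfun, dif_pos hk']
  omega

lemma pfun_image {k : ℕ} (hkn : k ≤ n) (h : ∀ m < k, pfun n π m < k) :
    (Finset.range k).image (pfun n π) = Finset.range k := by
  apply Finset.eq_of_subset_of_card_le
  · intro x hx
    simp only [Finset.mem_image, Finset.mem_range] at hx ⊢
    obtain ⟨m, hm, rfl⟩ := hx
    exact h m hm
  · rw [Finset.card_image_of_injOn]
    intro a ha' b hb' hab
    simp only [Finset.coe_range, Set.mem_Iio] at ha' hb'
    exact pfun_inj (by omega) (by omega) hab

/-- prefix argument: if positions `< k` have values `< k`, later positions have values `≥ k`. -/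
lemma pfun_prefix {k : ℕ} (hkn : k ≤ n) (h : ∀ m < k, pfun n π m < k)
    {q : ℕ} (hq1 : k ≤ q) (hq2 : q < n) : ¬ pfun n π q < k := by
  intro hcon
  have : pfun n π q ∈ (Finset.range k).image (pfun n π) := by
    rw [pfun_image hkn h, Finset.mem_range]; exact hcon
  simp only [Finset.mem_image, Finset.mem_range] at this
  obtain ⟨m, hm, hme⟩ := this
  have := pfun_inj (by omega) hq2 hme
  omega

lemma pfun_surj {v : ℕ} (hv : v < n) : ∃ m < n, pfun n π m = v := by
  have : v ∈ (Finset.range n).image (pfun n π) := by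
    rw [pfun_image le_rfl (fun m hm => pfun_lt hm), Finset.mem_range]; exact hv
  simp only [Finset.mem_image, Finset.mem_range] at this
  obtain ⟨m, hm, hme⟩ := this
  exact ⟨m, hm, hme⟩

lemma mem_extract_iff' {i : ℕ} :
    i ∈ extract n π ↔ ∃ k, ∃ _ : k < n, pfun n π k = k + 1 ∧ i = k + 1 := by
  rw [mem_extract_iff]
  constructor
  · rintro ⟨k, hk, h, rfl⟩
    exact ⟨k, hk, by rw [pfun, dif_pos hk]; exact h, rfl⟩
  · rintro ⟨k, hk, h, rfl⟩
    rw [pfun, dif_pos hk] at h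
    exact ⟨k, hk, h, rfl⟩

include hb ha in
/-- If the state at `k` is "open" (value `k+1` at position `k`), the swap closes at `k+1`. -/
lemma open_next {k : ℕ} (hk : k < n) (hpk : pfun n π k = k + 1)
    (hpre : ∀ m < k, pfun n π m < k) : pfun n π (k + 1) = k := by
  have hk1 : k + 1 < n := by have := pfun_lt (π := π) hk; omega
  by_contra hne
  obtain ⟨m, hm, hpm⟩ := pfun_surj (π := π) (v := k) (by omega)
  have hmk : ¬ m < k := fun h => by have := hpre m h; omega
  have hm0 : m ≠ k := fun h => by subst h; omega
  have hm1 : m ≠ k + 1 := fun h => by subst h; exact hne hpm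
  have hmgt : k + 2 ≤ m := by omega
  have later : ∀ q, k < q → q < n → q ≠ m → k + 2 ≤ pfun n π q := by
    intro q hq1 hq2 hqm
    have h1 : ¬ pfun n π q < k := pfun_prefix (by omega) hpre (by omega) hq2
    have h2 : pfun n π q ≠ k := fun h => hqm (pfun_inj hq2 hm (h.trans hpm.symm))
    have h3 : pfun n π q ≠ k + 1 := fun h => by
      have := pfun_inj hq2 hk (h.trans hpk.symm); omega
    omega
  have hmlast : m ≠ n - 1 := by
    intro h
    rw [h, pfun_last ha (by omega)] at hpm
    omega
  have hl : k + 2 ≤ pfun n π (m - 1) := later (m - 1) (by omega) (by omega) (by omega)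
  have hr : k + 2 ≤ pfun n π (m + 1) := later (m + 1) (by omega) (by omega) (by omega)
  have hm' : m - 1 + 1 = m := by omega
  have hbd1 := pfun_bdd hb (k := m - 1) (by omega)
  rw [hm'] at hbd1
  have hbd2 := pfun_bdd hb (k := m) (by omega)
  have e1 : pfun n π (m - 1) = k + 2 := by omega
  have e2 : pfun n π (m + 1) = k + 2 := by omega
  have := pfun_inj (π := π) (a := m - 1) (b := m + 1) (by omega) (by omega)
    (e1.trans e2.symm)
  omega

include hb ha in
lemma state : ∀ k, k < n → (∀ m ≤ k, pfun n π m ≤ k) ∨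
    (pfun n π k = k + 1 ∧ ∀ m < k, pfun n π m < k) := by
  intro k
  induction k with
  | zero =>
    intro h
    left
    intro m hm
    have : m = 0 := by omega
    rw [this, pfun_zero ha h]
  | succ k ih =>
    intro hk1
    have hk : k < n := by omega
    rcases ih hk with hC | hO
    · have hpref : ∀ m < k + 1, pfun n π m < k + 1 := fun m hm => by
        have := hC m (by omega); omega
      have hge : ¬ pfun n π (k + 1) < k + 1 := pfun_prefix (by omega) hpref le_rfl hk1
      have hbd := pfun_bdd hb hk1
      have hCk := hC k le_rfl
      have : pfun n π (k + 1) = k + 1 ∨ pfun n π (k + 1) = k + 2 := by omega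
      rcases this with h | h
      · left
        intro m hm
        by_cases hm' : m = k + 1
        · rw [hm']; omega
        · have := hpref m (by omega); omega
      · right
        exact ⟨h, hpref⟩
    · obtain ⟨hpk, hpre⟩ := hO
      have key := open_next hb ha hk hpk hpre
      left
      intro m hm
      by_cases h1 : m = k + 1
      · rw [h1]; omega
      · by_cases h2 : m = k
        · rw [h2]; omega
        · have := hpre m (by omega); omega

include hb ha in
lemma open_facts {k : ℕ} (hk : k < n) (hpk : pfun n π k = k + 1) :
    (∀ m < k, pfun n π m < k) ∧ pfun n π (k + 1) = k ∧ 1 ≤ k ∧ k + 3 ≤ n := by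
  have hpre : ∀ m < k, pfun n π m < k := by
    rcases state hb ha k hk with hC | hO
    · have := hC k le_rfl; omega
    · exact hO.2
  have hnext := open_next hb ha hk hpk hpre
  have hk1 : k + 1 < n := by have := pfun_lt (π := π) hk; omega
  have hk0 : 1 ≤ k := by
    rcases Nat.eq_zero_or_pos k with h | h
    · rw [h] at hpk; rw [pfun_zero ha (by omega)] at hpk; omega
    · exact h
  have hkn : k + 3 ≤ n := by
    by_contra h
    have hkl : k + 1 = n - 1 := by omega
    rw [hkl, pfun_last ha (by omega)] at hnext
    omega
  exact ⟨hpre, hnext, hk0, hkn⟩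

include hb ha in
lemma extract_sep {k k' : ℕ} (hk : k < n) (hk' : k' < n)
    (h1 : pfun n π k = k + 1) (h2 : pfun n π k' = k' + 1) (hlt : k < k') :
    k + 3 ≤ k' := by
  obtain ⟨-, hnext, -, hkn⟩ := open_facts hb ha hk h1
  have e1 : k' ≠ k + 1 := by
    intro h; rw [h] at h2; omega
  have e2 : k' ≠ k + 2 := by
    intro h
    rw [h] at h2
    have hbd := pfun_bdd hb (k := k + 1) (by omega)
    rw [hnext, h2] at hbd
    omega
  omega

include hb ha in
lemma sparse_extract : Sparse n (extract n π) := by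
  constructor
  · intro i hi
    rw [mem_extract_iff'] at hi
    obtain ⟨k, hk, hpk, rfl⟩ := hi
    obtain ⟨-, -, h1, h2⟩ := open_facts hb ha hk hpk
    omega
  · intro i hi j hj hne
    rw [mem_extract_iff'] at hi hj
    obtain ⟨k, hk, hpk, rfl⟩ := hi
    obtain ⟨k', hk', hpk', rfl⟩ := hj
    rcases lt_trichotomy k k' with h | h | h
    · have := extract_sep hb ha hk hk' hpk hpk' h; omega
    · omega
    · have := extract_sep hb ha hk' hk hpk' hpk h; omega

include hb ha in
lemma gfun_extract {x : ℕ} (hx : x < n) : gfun (extract n π) x = pfun n π x := by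
  by_cases h1 : x + 1 ∈ extract n π
  · have := h1
    rw [mem_extract_iff'] at this
    obtain ⟨k, hk, hpk, hke⟩ := this
    have : k = x := by omega
    subst this
    rw [gfun, if_pos h1, hpk]
  · by_cases h2 : x ∈ extract n π
    · have := h2
      rw [mem_extract_iff'] at this
      obtain ⟨k, hk, hpk, hke⟩ := this
      obtain ⟨-, hnext, -, -⟩ := open_facts hb ha hk hpk
      rw [gfun, if_neg h1, if_pos h2, hke]
      omega
    · rw [gfun, if_neg h1, if_neg h2]
      rcases state hb ha x hx with hC | hO
      · have hCx := hC x le_rfl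
        by_contra hne
        have hlt : pfun n π x < x := by omega
        have hx1 : 1 ≤ x := by omega
        have hx1' : x - 1 < n := by omega
        rcases state hb ha (x - 1) hx1' with hC' | hO'
        · have hpre : ∀ m < x, pfun n π m < x := fun m hm => by
            have := hC' m (by omega); omega
          exact pfun_prefix (by omega) hpre le_rfl hx hlt
        · have : x - 1 + 1 = x := by omega
          rw [this] at hO'
          exact h2 (mem_extract_iff'.mpr ⟨x - 1, hx1', by rw [this]; exact hO'.1, by omega⟩)
      · exact absurd (mem_extract_iff'.mpr ⟨x, hx, hO.1, rfl⟩) h1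

end classify

def theEquiv (n : ℕ) :
    {π : Equiv.Perm (Fin n) // IsKBounded 2 n π ∧ IsAnchored n π} ≃
      {I : Finset ℕ // Sparse n I} where
  toFun := fun p => ⟨extract n p.1, sparse_extract p.2.1 p.2.2⟩
  invFun := fun I => ⟨sigmaPerm I.2, sigmaPerm_bounded I.2, sigmaPerm_anchored I.2⟩
  left_inv := by
    rintro ⟨π, hb, ha⟩
    apply Subtype.ext
    apply Equiv.ext
    intro x
    apply Fin.ext
    show gfun (extract n π) (x : ℕ) = ((π x : Fin n) : ℕ)
    rw [gfun_extract hb ha x.2, pfun, dif_pos x.2]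
  right_inv := by
    rintro ⟨I, hS⟩
    apply Subtype.ext
    show extract n (sigmaPerm hS) = I
    ext i
    rw [mem_extract_iff']
    constructor
    · rintro ⟨k, hk, hpk, rfl⟩
      rw [pfun, dif_pos hk] at hpk
      rw [sigmaPerm_apply] at hpk
      simp only [Fin.val_mk] at hpk
      by_cases h1 : k + 1 ∈ I
      · exact h1
      · by_cases h2 : k ∈ I
        · rw [gfun, if_neg h1, if_pos h2] at hpk
          have := ge2 hS h2
          omega
        · rw [gfun, if_neg h1, if_neg h2] at hpk
          omega
    · intro hi
      have h2 : 2 ≤ i := ge2 hS hi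
      have hn : i + 2 ≤ n := le_n hS hi
      refine ⟨i - 1, by omega, ?_, by omega⟩
      rw [pfun, dif_pos (show i - 1 < n by omega), sigmaPerm_apply]
      simp only [Fin.val_mk]
      have he : i - 1 + 1 = i := by omega
      rw [gfun, he, if_pos hi]

end TwoBounded

theorem two_bounded_count_eq_sparse_subsets (n : ℕ) :
    numAnchored 2 n =
      Nat.card {I : Finset ℕ //
        (∀ i ∈ I, 2 ≤ i ∧ i + 2 ≤ n) ∧
        (∀ i ∈ I, ∀ j ∈ I, i ≠ j → 3 ≤ ((i : ℤ) - (j : ℤ)).natAbs)} := by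
  exact Nat.card_congr (TwoBounded.theEquiv n)
end

section
/- Let R_n be the number of 2-bounded anchored permutations of [n]. Then the generating function ∑_{n≥1} R_n x^n equals x/(1 - x - x^3) as a formal power series. -/
namespace TwoBounded

open Equiv

abbrev Good (n : ℕ) (π : Equiv.Perm (Fin n)) : Prop := IsKBounded 2 n π ∧ IsAnchored n π

abbrev A (n : ℕ) := {π : Equiv.Perm (Fin n) // Good n π}

lemma numAnchored_eq (n : ℕ) : numAnchored 2 n = Nat.card (A n) := rfl

lemma step {n : ℕ} {π : Equiv.Perm (Fin n)} (hb : IsKBounded 2 n π) (i : ℕ) (h : i + 1 < n) :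
    ((π ⟨i+1, h⟩ : ℕ) : ℤ) - ((π ⟨i, by omega⟩ : ℕ) : ℤ) ≤ 2 ∧
    ((π ⟨i, by omega⟩ : ℕ) : ℤ) - ((π ⟨i+1, h⟩ : ℕ) : ℤ) ≤ 2 := by
  have := hb ⟨i, by omega⟩ ⟨i+1, h⟩ rfl
  omega

/-- extend by a fixed point at the start -/
noncomputable def ext1 {m : ℕ} (σ : Equiv.Perm (Fin m)) : Equiv.Perm (Fin (m+1)) :=
  Equiv.ofBijective
    (fun j => if h : (j : ℕ) = 0 then ⟨0, Nat.succ_pos m⟩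
      else ⟨(σ ⟨(j : ℕ) - 1, by omega⟩ : ℕ) + 1, by
        have := (σ ⟨(j : ℕ) - 1, by omega⟩).isLt; omega⟩)
    (Finite.injective_iff_bijective.mp (by
      intro a b hab
      by_cases ha : (a : ℕ) = 0 <;> by_cases hb : (b : ℕ) = 0 <;>
        simp only [ha, hb, dif_pos, dif_neg, not_false_iff, Fin.mk.injEq] at hab <;>
        try exact Fin.ext (by omega)
      have h3 := σ.injective (Fin.val_injective (Nat.add_right_cancel hab))
      have h4 := congrArg Fin.val h3
      simp only [Fin.val_mk] at h4
      exact Fin.ext (by omega)))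

lemma ext1_val_zero {m : ℕ} (σ : Equiv.Perm (Fin m)) (h : 0 < m + 1) :
    ((ext1 σ ⟨0, h⟩ : Fin (m+1)) : ℕ) = 0 := by
  simp [ext1, Equiv.ofBijective]

lemma ext1_val_succ {m : ℕ} (σ : Equiv.Perm (Fin m)) (i : ℕ) (h : i + 1 < m + 1) :
    ((ext1 σ ⟨i + 1, h⟩ : Fin (m+1)) : ℕ) = (σ ⟨i, by omega⟩ : ℕ) + 1 := by
  simp [ext1, Equiv.ofBijective]

/-- raw function for ext3 -/
def f3fun {m : ℕ} (σ : Equiv.Perm (Fin m)) : Fin (m+3) → Fin (m+3) :=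
  fun j => if h0 : (j : ℕ) = 0 then ⟨0, by omega⟩
    else if h1 : (j : ℕ) = 1 then ⟨2, by omega⟩
    else if h2 : (j : ℕ) = 2 then ⟨1, by omega⟩
    else ⟨(σ ⟨(j : ℕ) - 3, by omega⟩ : ℕ) + 3, by
      have := (σ ⟨(j : ℕ) - 3, by omega⟩).isLt; omega⟩

lemma f3fun_val_zero {m : ℕ} (σ : Equiv.Perm (Fin m)) (j : Fin (m+3)) (hj : (j : ℕ) = 0) :
    ((f3fun σ j : Fin (m+3)) : ℕ) = 0 := by
  obtain ⟨jv, hlt⟩ := j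
  have : jv = 0 := hj
  subst this
  simp [f3fun]

lemma f3fun_val_one {m : ℕ} (σ : Equiv.Perm (Fin m)) (j : Fin (m+3)) (hj : (j : ℕ) = 1) :
    ((f3fun σ j : Fin (m+3)) : ℕ) = 2 := by
  obtain ⟨jv, hlt⟩ := j
  have : jv = 1 := hj
  subst this
  simp [f3fun]

lemma f3fun_val_two {m : ℕ} (σ : Equiv.Perm (Fin m)) (j : Fin (m+3)) (hj : (j : ℕ) = 2) :
    ((f3fun σ j : Fin (m+3)) : ℕ) = 1 := by
  obtain ⟨jv, hlt⟩ := j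
  have : jv = 2 := hj
  subst this
  simp [f3fun]

lemma f3fun_val_big {m : ℕ} (σ : Equiv.Perm (Fin m)) (j : Fin (m+3)) (i : ℕ)
    (hj : (j : ℕ) = i + 3) :
    ((f3fun σ j : Fin (m+3)) : ℕ) = (σ ⟨i, by omega⟩ : ℕ) + 3 := by
  obtain ⟨jv, hlt⟩ := j
  have : jv = i + 3 := hj
  subst this
  simp [f3fun]

lemma f3fun_injective {m : ℕ} (σ : Equiv.Perm (Fin m)) : Function.Injective (f3fun σ) := by
  intro a b hab
  have h := congrArg Fin.val hab
  have ha4 : (a : ℕ) = 0 ∨ (a : ℕ) = 1 ∨ (a : ℕ) = 2 ∨ ∃ i, (a : ℕ) = i + 3 := by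
    rcases Nat.lt_or_ge (a : ℕ) 3 with h' | h'
    · omega
    · exact Or.inr (Or.inr (Or.inr ⟨(a : ℕ) - 3, by omega⟩))
  have hb4 : (b : ℕ) = 0 ∨ (b : ℕ) = 1 ∨ (b : ℕ) = 2 ∨ ∃ i, (b : ℕ) = i + 3 := by
    rcases Nat.lt_or_ge (b : ℕ) 3 with h' | h'
    · omega
    · exact Or.inr (Or.inr (Or.inr ⟨(b : ℕ) - 3, by omega⟩))
  rcases ha4 with ha | ha | ha | ⟨i, ha⟩ <;> rcases hb4 with hb | hb | hb | ⟨k, hb⟩ <;>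
    [rw [f3fun_val_zero σ a ha, f3fun_val_zero σ b hb] at h;
     rw [f3fun_val_zero σ a ha, f3fun_val_one σ b hb] at h;
     rw [f3fun_val_zero σ a ha, f3fun_val_two σ b hb] at h;
     rw [f3fun_val_zero σ a ha, f3fun_val_big σ b k hb] at h;
     rw [f3fun_val_one σ a ha, f3fun_val_zero σ b hb] at h;
     rw [f3fun_val_one σ a ha, f3fun_val_one σ b hb] at h;
     rw [f3fun_val_one σ a ha, f3fun_val_two σ b hb] at h;
     rw [f3fun_val_one σ a ha, f3fun_val_big σ b k hb] at h;
     rw [f3fun_val_two σ a ha, f3fun_val_zero σ b hb] at h;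
     rw [f3fun_val_two σ a ha, f3fun_val_one σ b hb] at h;
     rw [f3fun_val_two σ a ha, f3fun_val_two σ b hb] at h;
     rw [f3fun_val_two σ a ha, f3fun_val_big σ b k hb] at h;
     rw [f3fun_val_big σ a i ha, f3fun_val_zero σ b hb] at h;
     rw [f3fun_val_big σ a i ha, f3fun_val_one σ b hb] at h;
     rw [f3fun_val_big σ a i ha, f3fun_val_two σ b hb] at h;
     rw [f3fun_val_big σ a i ha, f3fun_val_big σ b k hb] at h] <;>
    try exact Fin.ext (by omega)
  · -- both big
    have h3 := σ.injective (Fin.val_injective (Nat.add_right_cancel h))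
    have h4 := congrArg Fin.val h3
    simp only [Fin.val_mk] at h4
    exact Fin.ext (by omega)

/-- extend by the block 0, 2, 1 at the start (shifted by 3) -/
noncomputable def ext3 {m : ℕ} (σ : Equiv.Perm (Fin m)) : Equiv.Perm (Fin (m+3)) :=
  Equiv.ofBijective (f3fun σ) (Finite.injective_iff_bijective.mp (f3fun_injective σ))

lemma ext3_apply {m : ℕ} (σ : Equiv.Perm (Fin m)) (j : Fin (m+3)) :
    ext3 σ j = f3fun σ j := rfl

lemma ext3_val_zero {m : ℕ} (σ : Equiv.Perm (Fin m)) (h : 0 < m + 3) :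
    ((ext3 σ ⟨0, h⟩ : Fin (m+3)) : ℕ) = 0 := f3fun_val_zero σ _ rfl

lemma ext3_val_one {m : ℕ} (σ : Equiv.Perm (Fin m)) (h : 1 < m + 3) :
    ((ext3 σ ⟨1, h⟩ : Fin (m+3)) : ℕ) = 2 := f3fun_val_one σ _ rfl

lemma ext3_val_two {m : ℕ} (σ : Equiv.Perm (Fin m)) (h : 2 < m + 3) :
    ((ext3 σ ⟨2, h⟩ : Fin (m+3)) : ℕ) = 1 := f3fun_val_two σ _ rfl

lemma ext3_val_succ {m : ℕ} (σ : Equiv.Perm (Fin m)) (i : ℕ) (h : i + 3 < m + 3) :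
    ((ext3 σ ⟨i + 3, h⟩ : Fin (m+3)) : ℕ) = (σ ⟨i, by omega⟩ : ℕ) + 3 :=
  f3fun_val_big σ _ i rfl

lemma anchored_zero {n : ℕ} {π : Equiv.Perm (Fin n)} (h : IsAnchored n π) (hn : 0 < n) :
    ((π ⟨0, hn⟩ : Fin n) : ℕ) = 0 := by
  have := (h ⟨0, hn⟩).1 rfl
  exact congrArg Fin.val this

lemma anchored_last {n : ℕ} {π : Equiv.Perm (Fin n)} (h : IsAnchored n π) (k : ℕ)
    (hk : k + 1 = n) : ((π ⟨k, by omega⟩ : Fin n) : ℕ) = k := by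
  have := (h ⟨k, by omega⟩).2 (by simp; omega)
  exact congrArg Fin.val this

lemma ext1_vz {m : ℕ} (σ : Equiv.Perm (Fin m)) (j : Fin (m+1)) (hj : (j : ℕ) = 0) :
    ((ext1 σ j : Fin (m+1)) : ℕ) = 0 := by
  obtain ⟨jv, h⟩ := j
  have : jv = 0 := hj
  subst this
  exact ext1_val_zero σ h

lemma ext1_vs {m : ℕ} (σ : Equiv.Perm (Fin m)) (j : Fin (m+1)) (i : ℕ) (hj : (j : ℕ) = i + 1) :
    ((ext1 σ j : Fin (m+1)) : ℕ) = (σ ⟨i, by omega⟩ : ℕ) + 1 := by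
  obtain ⟨jv, h⟩ := j
  have : jv = i + 1 := hj
  subst this
  exact ext1_val_succ σ i h

lemma ext3_vz {m : ℕ} (σ : Equiv.Perm (Fin m)) (j : Fin (m+3)) (hj : (j : ℕ) = 0) :
    ((ext3 σ j : Fin (m+3)) : ℕ) = 0 := f3fun_val_zero σ j hj

lemma ext3_v1 {m : ℕ} (σ : Equiv.Perm (Fin m)) (j : Fin (m+3)) (hj : (j : ℕ) = 1) :
    ((ext3 σ j : Fin (m+3)) : ℕ) = 2 := f3fun_val_one σ j hj

lemma ext3_v2 {m : ℕ} (σ : Equiv.Perm (Fin m)) (j : Fin (m+3)) (hj : (j : ℕ) = 2) :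
    ((ext3 σ j : Fin (m+3)) : ℕ) = 1 := f3fun_val_two σ j hj

lemma ext3_vs {m : ℕ} (σ : Equiv.Perm (Fin m)) (j : Fin (m+3)) (i : ℕ) (hj : (j : ℕ) = i + 3) :
    ((ext3 σ j : Fin (m+3)) : ℕ) = (σ ⟨i, by omega⟩ : ℕ) + 3 := f3fun_val_big σ j i hj

lemma good_ext1 {m : ℕ} {σ : Equiv.Perm (Fin m)} (h : Good m σ) : Good (m+1) (ext1 σ) := by
  constructor
  · intro i j hij
    rcases Nat.eq_zero_or_pos (i : ℕ) with h0 | h0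
    · rw [ext1_vz σ i h0, ext1_vs σ j 0 (by omega)]
      have hm : 0 < m := by have := j.isLt; omega
      have := anchored_zero h.2 hm
      omega
    · obtain ⟨k, hk⟩ : ∃ k, (i : ℕ) = k + 1 := ⟨(i : ℕ) - 1, by omega⟩
      rw [ext1_vs σ i k hk, ext1_vs σ j (k+1) (by omega)]
      have hk1 : k + 1 < m := by have := j.isLt; omega
      have hσ := h.1 ⟨k, by omega⟩ ⟨k+1, by omega⟩ rfl
      omega
  · intro i
    constructor <;> intro hi <;> apply Fin.ext
    · rw [ext1_vz σ i hi]; omega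
    · have hi' : (i : ℕ) = m := by omega
      rcases Nat.eq_zero_or_pos m with h0 | h0
      · rw [ext1_vz σ i (by omega)]; omega
      · obtain ⟨k, hk⟩ : ∃ k, m = k + 1 := ⟨m - 1, by omega⟩
        rw [ext1_vs σ i k (by omega)]
        have := anchored_last h.2 k (by omega)
        omega

lemma good_ext3 {m : ℕ} {σ : Equiv.Perm (Fin m)} (hm : 0 < m) (h : Good m σ) :
    Good (m+3) (ext3 σ) := by
  constructor
  · intro i j hij
    have h4 : (i : ℕ) = 0 ∨ (i : ℕ) = 1 ∨ (i : ℕ) = 2 ∨ ∃ k, (i : ℕ) = k + 3 := by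
      rcases Nat.lt_or_ge (i : ℕ) 3 with h' | h'
      · omega
      · exact Or.inr (Or.inr (Or.inr ⟨(i : ℕ) - 3, by omega⟩))
    rcases h4 with h0 | h0 | h0 | ⟨k, h0⟩
    · rw [ext3_vz σ i h0, ext3_v1 σ j (by omega)]; simp
    · rw [ext3_v1 σ i h0, ext3_v2 σ j (by omega)]; simp
    · rw [ext3_v2 σ i h0, ext3_vs σ j 0 (by omega)]
      have := anchored_zero h.2 hm
      omega
    · rw [ext3_vs σ i k h0, ext3_vs σ j (k+1) (by omega)]
      have hk1 : k + 1 < m := by have := j.isLt; omega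
      have hσ := h.1 ⟨k, by omega⟩ ⟨k+1, by omega⟩ rfl
      omega
  · intro i
    constructor <;> intro hi <;> apply Fin.ext
    · rw [ext3_vz σ i hi]; omega
    · have hi' : (i : ℕ) = m + 2 := by omega
      obtain ⟨k, hk⟩ : ∃ k, m = k + 1 := ⟨m - 1, by omega⟩
      rw [ext3_vs σ i k (by omega)]
      have := anchored_last h.2 k (by omega)
      omega

section Extract

variable {m : ℕ} {π : Equiv.Perm (Fin (m+4))}

lemma pinj (π : Equiv.Perm (Fin (m+4))) : ∀ (a b : ℕ) (ha : a < m+4) (hb : b < m+4),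
    ((π ⟨a, ha⟩ : Fin (m+4)) : ℕ) = ((π ⟨b, hb⟩ : Fin (m+4)) : ℕ) → a = b := by
  intro a b ha hb H
  have := π.injective (Fin.val_injective H)
  exact congrArg Fin.val this

lemma keyπ (π : Equiv.Perm (Fin (m+4))) (a b : ℕ) (ha : a < m+4) (hb : b < m+4)
    (hab : a = b) :
    ((π ⟨a, ha⟩ : Fin (m+4)) : ℕ) = ((π ⟨b, hb⟩ : Fin (m+4)) : ℕ) := by subst hab; rfl

lemma val_one_cases (h : Good (m+4) π) :
    ((π ⟨1, by omega⟩ : Fin (m+4)) : ℕ) = 1 ∨ ((π ⟨1, by omega⟩ : Fin (m+4)) : ℕ) = 2 := by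
  have hz := anchored_zero h.2 (by omega)
  have hs := step h.1 0 (by omega)
  have e01 := keyπ π (0+1) 1 (by omega) (by omega) rfl
  have hne := pinj π 1 0 (by omega) (by omega)
  omega

lemma force (h : Good (m+4) π) (hc : ((π ⟨1, by omega⟩ : Fin (m+4)) : ℕ) = 2) :
    ((π ⟨2, by omega⟩ : Fin (m+4)) : ℕ) = 1 ∧ ((π ⟨3, by omega⟩ : Fin (m+4)) : ℕ) = 3 := by
  have hz := anchored_zero h.2 (by omega)
  have hl := anchored_last h.2 (m+3) rfl
  have h2 : ((π ⟨2, by omega⟩ : Fin (m+4)) : ℕ) = 1 := by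
    set jF := π.symm ⟨1, by omega⟩ with hjFdef
    have hjF : π jF = ⟨1, by omega⟩ := Equiv.apply_symm_apply π _
    have hjFv : ((π jF : Fin (m+4)) : ℕ) = 1 := by rw [hjF]
    have hjFeq : jF = ⟨(jF : ℕ), jF.isLt⟩ := rfl
    have hjv : ((π ⟨(jF : ℕ), jF.isLt⟩ : Fin (m+4)) : ℕ) = 1 := by rw [← hjFeq]; exact hjFv
    have hne0 : (jF : ℕ) ≠ 0 := by
      intro h0
      have e := keyπ π (jF : ℕ) 0 jF.isLt (by omega) h0
      omega
    have hne1 : (jF : ℕ) ≠ 1 := by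
      intro h0
      have e := keyπ π (jF : ℕ) 1 jF.isLt (by omega) h0
      omega
    by_cases h2' : (jF : ℕ) = 2
    · have e := keyπ π (jF : ℕ) 2 jF.isLt (by omega) h2'
      omega
    · exfalso
      have hnelast : (jF : ℕ) ≠ m + 3 := by
        intro h0
        have e := keyπ π (jF : ℕ) (m+3) jF.isLt (by omega) h0
        omega
      obtain ⟨k, hk⟩ : ∃ k, (jF : ℕ) = k + 1 := ⟨(jF : ℕ) - 1, by omega⟩
      have hk2 : 2 ≤ k := by omega
      have hklt : k + 2 < m + 4 := by omega
      have hjv' : ((π ⟨k+1, by omega⟩ : Fin (m+4)) : ℕ) = 1 := by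
        have e := keyπ π (jF : ℕ) (k+1) jF.isLt (by omega) hk
        omega
      have sa := step h.1 k (by omega)
      have sb := step h.1 (k+1) (by omega)
      -- π at k and k+2 both forced to be 3
      have pa0 : ((π ⟨k, by omega⟩ : Fin (m+4)) : ℕ) ≠ 0 := fun H => by
        have := pinj π k 0 (by omega) (by omega) (by omega)
        omega
      have pa1 : ((π ⟨k, by omega⟩ : Fin (m+4)) : ℕ) ≠ 1 := fun H => by
        have := pinj π k (k+1) (by omega) (by omega) (by omega)
        omega
      have pa2 : ((π ⟨k, by omega⟩ : Fin (m+4)) : ℕ) ≠ 2 := fun H => by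
        have := pinj π k 1 (by omega) (by omega) (by omega)
        omega
      have pb0 : ((π ⟨k+1+1, by omega⟩ : Fin (m+4)) : ℕ) ≠ 0 := fun H => by
        have := pinj π (k+1+1) 0 (by omega) (by omega) (by omega)
        omega
      have pb1 : ((π ⟨k+1+1, by omega⟩ : Fin (m+4)) : ℕ) ≠ 1 := fun H => by
        have := pinj π (k+1+1) (k+1) (by omega) (by omega) (by omega)
        omega
      have pb2 : ((π ⟨k+1+1, by omega⟩ : Fin (m+4)) : ℕ) ≠ 2 := fun H => by
        have := pinj π (k+1+1) 1 (by omega) (by omega) (by omega)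
        omega
      have pa3 : ((π ⟨k, by omega⟩ : Fin (m+4)) : ℕ) = 3 := by omega
      have pb3 : ((π ⟨k+1+1, by omega⟩ : Fin (m+4)) : ℕ) = 3 := by omega
      have := pinj π k (k+1+1) (by omega) (by omega) (by omega)
      omega
  refine ⟨h2, ?_⟩
  have s2 := step h.1 2 (by omega)
  have e23 := keyπ π (2+1) 3 (by omega) (by omega) rfl
  have p0 : ((π ⟨3, by omega⟩ : Fin (m+4)) : ℕ) ≠ 0 := fun H => by
    have := pinj π 3 0 (by omega) (by omega) (by omega)
    omega
  have p1 : ((π ⟨3, by omega⟩ : Fin (m+4)) : ℕ) ≠ 1 := fun H => by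
    have := pinj π 3 2 (by omega) (by omega) (by omega)
    omega
  have p2 : ((π ⟨3, by omega⟩ : Fin (m+4)) : ℕ) ≠ 2 := fun H => by
    have := pinj π 3 1 (by omega) (by omega) (by omega)
    omega
  omega

set_option maxHeartbeats 2000000 in
lemma extract_s7 {m : ℕ} (π : Equiv.Perm (Fin (m+4))) (h : Good (m+4) π) :
    (∃ σ : Equiv.Perm (Fin (m+3)), Good (m+3) σ ∧ ext1 σ = π) ∨
    (∃ σ : Equiv.Perm (Fin (m+1)), Good (m+1) σ ∧ ext3 σ = π) := by
  have hz := anchored_zero h.2 (by omega)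
  have hl := anchored_last h.2 (m+3) rfl
  rcases val_one_cases h with hc | hc
  · -- π fixes 1; peel off the first point
    left
    -- every position ≥ 1 has value ≥ 1
    have hpos : ∀ (k : ℕ) (hk : k + 1 < m + 4), 1 ≤ ((π ⟨k+1, hk⟩ : Fin (m+4)) : ℕ) := by
      intro k hk
      by_contra H
      have := pinj π (k+1) 0 (by omega) (by omega) (by omega)
      omega
    set f : Fin (m+3) → Fin (m+3) := fun j =>
      ⟨((π ⟨(j : ℕ)+1, by omega⟩ : Fin (m+4)) : ℕ) - 1, by
        have := (π ⟨(j : ℕ)+1, by omega⟩ : Fin (m+4)).isLt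
        omega⟩ with hf
    have hfval : ∀ j : Fin (m+3),
        ((f j : Fin (m+3)) : ℕ) = ((π ⟨(j : ℕ)+1, by omega⟩ : Fin (m+4)) : ℕ) - 1 :=
      fun j => rfl
    have hinj : Function.Injective f := by
      intro a b hab
      have hv := congrArg Fin.val hab
      rw [hfval a, hfval b] at hv
      have ha1 := hpos (a : ℕ) (by omega)
      have hb1 := hpos (b : ℕ) (by omega)
      have := pinj π ((a : ℕ)+1) ((b : ℕ)+1) (by omega) (by omega) (by omega)
      exact Fin.ext (by omega)
    refine ⟨Equiv.ofBijective f (Finite.injective_iff_bijective.mp hinj), ⟨?_, ?_⟩, ?_⟩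
    · -- bounded
      intro i j hij
      show ((((f j : Fin (m+3)) : ℕ) : ℤ) - (((f i : Fin (m+3)) : ℕ) : ℤ)).natAbs ≤ 2
      rw [hfval i, hfval j]
      have ha1 := hpos (i : ℕ) (by omega)
      have hb1 := hpos (j : ℕ) (by omega)
      have hππ := h.1 ⟨(i : ℕ)+1, by omega⟩ ⟨(j : ℕ)+1, by omega⟩ (by simp [hij])
      omega
    · -- anchored
      intro i
      constructor <;> intro hi <;> apply Fin.ext
      · show ((f i : Fin (m+3)) : ℕ) = (i : ℕ)
        rw [hfval i]
        have e := keyπ π ((i : ℕ)+1) 1 (by omega) (by omega) (by omega)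
        omega
      · show ((f i : Fin (m+3)) : ℕ) = (i : ℕ)
        rw [hfval i]
        have hi' : (i : ℕ) = m + 2 := by omega
        have e := keyπ π ((i : ℕ)+1) (m+3) (by omega) (by omega) (by omega)
        omega
    · -- ext1 σ = π
      apply Equiv.ext
      intro j
      apply Fin.ext
      have ej : ((π j : Fin (m+4)) : ℕ) = ((π ⟨(j : ℕ), j.isLt⟩ : Fin (m+4)) : ℕ) := rfl
      rcases Nat.eq_zero_or_pos (j : ℕ) with h0 | h0
      · rw [ext1_vz _ j h0]
        have e := keyπ π (j : ℕ) 0 (by omega) (by omega) h0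
        omega
      · obtain ⟨k, hk⟩ : ∃ k, (j : ℕ) = k + 1 := ⟨(j : ℕ) - 1, by omega⟩
        rw [ext1_vs _ j k hk]
        have hv : ((Equiv.ofBijective f (Finite.injective_iff_bijective.mp hinj)
            ⟨k, by omega⟩ : Fin (m+3)) : ℕ)
            = ((π ⟨k+1, by omega⟩ : Fin (m+4)) : ℕ) - 1 := hfval ⟨k, by omega⟩
        have hp := hpos k (by omega)
        have e := keyπ π (k+1) (j : ℕ) (by omega) (by omega) (by omega)
        omega
  · -- π 1 = 2 : peel off a block of three
    right
    obtain ⟨hc2, hc3⟩ := force h hc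
    -- every position ≥ 3 has value ≥ 3
    have hpos : ∀ (k : ℕ) (hk : k + 3 < m + 4), 3 ≤ ((π ⟨k+3, hk⟩ : Fin (m+4)) : ℕ) := by
      intro k hk
      by_contra H
      have hv0 := pinj π (k+3) 0 (by omega) (by omega)
      have hv1 := pinj π (k+3) 1 (by omega) (by omega)
      have hv2 := pinj π (k+3) 2 (by omega) (by omega)
      omega
    set f : Fin (m+1) → Fin (m+1) := fun j =>
      ⟨((π ⟨(j : ℕ)+3, by omega⟩ : Fin (m+4)) : ℕ) - 3, by
        have := (π ⟨(j : ℕ)+3, by omega⟩ : Fin (m+4)).isLt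
        omega⟩ with hf
    have hfval : ∀ j : Fin (m+1),
        ((f j : Fin (m+1)) : ℕ) = ((π ⟨(j : ℕ)+3, by omega⟩ : Fin (m+4)) : ℕ) - 3 :=
      fun j => rfl
    have hinj : Function.Injective f := by
      intro a b hab
      have hv := congrArg Fin.val hab
      rw [hfval a, hfval b] at hv
      have ha1 := hpos (a : ℕ) (by omega)
      have hb1 := hpos (b : ℕ) (by omega)
      have := pinj π ((a : ℕ)+3) ((b : ℕ)+3) (by omega) (by omega) (by omega)
      exact Fin.ext (by omega)
    refine ⟨Equiv.ofBijective f (Finite.injective_iff_bijective.mp hinj), ⟨?_, ?_⟩, ?_⟩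
    · -- bounded
      intro i j hij
      show ((((f j : Fin (m+1)) : ℕ) : ℤ) - (((f i : Fin (m+1)) : ℕ) : ℤ)).natAbs ≤ 2
      rw [hfval i, hfval j]
      have ha1 := hpos (i : ℕ) (by omega)
      have hb1 := hpos (j : ℕ) (by omega)
      have hππ := h.1 ⟨(i : ℕ)+3, by omega⟩ ⟨(j : ℕ)+3, by omega⟩ (by simp [hij])
      omega
    · -- anchored
      intro i
      constructor <;> intro hi <;> apply Fin.ext
      · show ((f i : Fin (m+1)) : ℕ) = (i : ℕ)
        rw [hfval i]
        have e := keyπ π ((i : ℕ)+3) 3 (by omega) (by omega) (by omega)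
        omega
      · show ((f i : Fin (m+1)) : ℕ) = (i : ℕ)
        rw [hfval i]
        have hi' : (i : ℕ) = m := by omega
        have e := keyπ π ((i : ℕ)+3) (m+3) (by omega) (by omega) (by omega)
        omega
    · -- ext3 σ = π
      apply Equiv.ext
      intro j
      apply Fin.ext
      have ej : ((π j : Fin (m+4)) : ℕ) = ((π ⟨(j : ℕ), j.isLt⟩ : Fin (m+4)) : ℕ) := rfl
      have h4 : (j : ℕ) = 0 ∨ (j : ℕ) = 1 ∨ (j : ℕ) = 2 ∨ ∃ k, (j : ℕ) = k + 3 := by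
        rcases Nat.lt_or_ge (j : ℕ) 3 with h' | h'
        · omega
        · exact Or.inr (Or.inr (Or.inr ⟨(j : ℕ) - 3, by omega⟩))
      rcases h4 with h0 | h0 | h0 | ⟨k, h0⟩
      · rw [ext3_vz _ j h0]
        have e := keyπ π (j : ℕ) 0 (by omega) (by omega) h0
        omega
      · rw [ext3_v1 _ j h0]
        have e := keyπ π (j : ℕ) 1 (by omega) (by omega) h0
        omega
      · rw [ext3_v2 _ j h0]
        have e := keyπ π (j : ℕ) 2 (by omega) (by omega) h0
        omega
      · rw [ext3_vs _ j k h0]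
        have hv : ((Equiv.ofBijective f (Finite.injective_iff_bijective.mp hinj)
            ⟨k, by omega⟩ : Fin (m+1)) : ℕ)
            = ((π ⟨k+3, by omega⟩ : Fin (m+4)) : ℕ) - 3 := hfval ⟨k, by omega⟩
        have hp := hpos k (by omega)
        have e := keyπ π (k+3) (j : ℕ) (by omega) (by omega) (by omega)
        omega

end Extract

lemma ext1_inj {m : ℕ} {σ τ : Equiv.Perm (Fin m)} (h : ext1 σ = ext1 τ) : σ = τ := by
  apply Equiv.ext
  intro i
  apply Fin.ext
  have hc := congrArg (fun ρ : Equiv.Perm (Fin (m+1)) =>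
    ((ρ ⟨(i : ℕ)+1, by omega⟩ : Fin (m+1)) : ℕ)) h
  rw [ext1_vs σ _ (i : ℕ) rfl, ext1_vs τ _ (i : ℕ) rfl] at hc
  have e1 : ((σ ⟨(i : ℕ), by omega⟩ : Fin m) : ℕ) = ((σ i : Fin m) : ℕ) := rfl
  have e2 : ((τ ⟨(i : ℕ), by omega⟩ : Fin m) : ℕ) = ((τ i : Fin m) : ℕ) := rfl
  omega

lemma ext3_inj {m : ℕ} {σ τ : Equiv.Perm (Fin m)} (h : ext3 σ = ext3 τ) : σ = τ := by
  apply Equiv.ext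
  intro i
  apply Fin.ext
  have hc := congrArg (fun ρ : Equiv.Perm (Fin (m+3)) =>
    ((ρ ⟨(i : ℕ)+3, by omega⟩ : Fin (m+3)) : ℕ)) h
  rw [ext3_vs σ _ (i : ℕ) rfl, ext3_vs τ _ (i : ℕ) rfl] at hc
  have e1 : ((σ ⟨(i : ℕ), by omega⟩ : Fin m) : ℕ) = ((σ i : Fin m) : ℕ) := rfl
  have e2 : ((τ ⟨(i : ℕ), by omega⟩ : Fin m) : ℕ) = ((τ i : Fin m) : ℕ) := rfl
  omega

lemma ext1_ne_ext3 {m : ℕ} {σ : Equiv.Perm (Fin (m+3))} {τ : Equiv.Perm (Fin (m+1))}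
    (hσ : Good (m+3) σ)
    (h : ext1 σ = (ext3 τ : Equiv.Perm (Fin (m+1+3)))) : False := by
  have hc := congrArg (fun ρ : Equiv.Perm (Fin (m+4)) =>
    ((ρ ⟨1, by omega⟩ : Fin (m+4)) : ℕ)) h
  rw [ext1_vs σ _ 0 rfl] at hc
  rw [ext3_v1 τ _ rfl] at hc
  have := anchored_zero hσ.2 (show 0 < m + 3 by omega)
  omega

lemma card_rec (m : ℕ) :
    Nat.card (A (m+4)) = Nat.card (A (m+3)) + Nat.card (A (m+1)) := by
  classical
  let Φ : A (m+3) ⊕ A (m+1) → A (m+4) :=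
    Sum.elim (fun σ => ⟨ext1 σ.1, good_ext1 σ.2⟩)
      (fun σ => ⟨ext3 σ.1, good_ext3 (by omega) σ.2⟩)
  have hbij : Function.Bijective Φ := by
    constructor
    · rintro (a | a) (b | b) hab <;>
        simp only [Φ, Sum.elim_inl, Sum.elim_inr, Subtype.mk.injEq] at hab
      · exact congrArg Sum.inl (Subtype.ext (ext1_inj hab))
      · exact absurd hab (fun h => ext1_ne_ext3 a.2 h)
      · exact absurd hab.symm (fun h => ext1_ne_ext3 b.2 h)
      · exact congrArg Sum.inr (Subtype.ext (ext3_inj hab))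
    · rintro ⟨π, hπ⟩
      rcases extract_s7 π hπ with ⟨σ, hσ, he⟩ | ⟨σ, hσ, he⟩
      · exact ⟨Sum.inl ⟨σ, hσ⟩, Subtype.ext he⟩
      · exact ⟨Sum.inr ⟨σ, hσ⟩, Subtype.ext he⟩
  rw [← Nat.card_sum, Nat.card_congr (Equiv.ofBijective Φ hbij)]

lemma good_one (n : ℕ) : Good n 1 := by
  constructor
  · intro i j hij
    simp only [Equiv.Perm.one_apply]
    omega
  · intro i
    exact ⟨fun _ => rfl, fun _ => rfl⟩

lemma card_small (n : ℕ) (huniq : ∀ π : Equiv.Perm (Fin n), Good n π → π = 1) :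
    Nat.card (A n) = 1 := by
  rw [Nat.card_eq_one_iff_unique]
  exact ⟨⟨fun a b => Subtype.ext ((huniq a.1 a.2).trans (huniq b.1 b.2).symm)⟩,
    ⟨⟨1, good_one n⟩⟩⟩

instance (k n : ℕ) (π : Equiv.Perm (Fin n)) : Decidable (IsKBounded k n π) := by
  unfold IsKBounded; infer_instance

instance (n : ℕ) (π : Equiv.Perm (Fin n)) : Decidable (IsAnchored n π) := by
  unfold IsAnchored; infer_instance

lemma uniq1 : ∀ π : Equiv.Perm (Fin 1), Good 1 π → π = 1 := by decide
lemma uniq2 : ∀ π : Equiv.Perm (Fin 2), Good 2 π → π = 1 := by decide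
lemma uniq3 : ∀ π : Equiv.Perm (Fin 3), Good 3 π → π = 1 := by decide

lemma R1 : numAnchored 2 1 = 1 := card_small 1 uniq1
lemma R2 : numAnchored 2 2 = 1 := card_small 2 uniq2
lemma R3 : numAnchored 2 3 = 1 := card_small 3 uniq3

lemma Rrec (m : ℕ) :
    numAnchored 2 (m+4) = numAnchored 2 (m+3) + numAnchored 2 (m+1) := card_rec m

end TwoBounded

open PowerSeries in
theorem two_bounded_generating_function :
    (PowerSeries.mk fun n => if n = 0 then (0 : ℚ) else (numAnchored 2 n : ℚ)) *
        (1 - X - X ^ 3) = X := by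
  have key : (PowerSeries.mk fun n => if n = 0 then (0 : ℚ) else (numAnchored 2 n : ℚ)) *
        (1 - X - X ^ 3)
      = (PowerSeries.mk fun n => if n = 0 then (0 : ℚ) else (numAnchored 2 n : ℚ))
        - (PowerSeries.mk fun n => if n = 0 then (0 : ℚ) else (numAnchored 2 n : ℚ)) * X ^ 1
        - (PowerSeries.mk fun n => if n = 0 then (0 : ℚ) else (numAnchored 2 n : ℚ)) * X ^ 3 := by
    ring
  rw [key]
  ext n
  rw [map_sub, map_sub, coeff_mk, coeff_mul_X_pow', coeff_mul_X_pow', coeff_X]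
  rcases n with _ | (_ | (_ | (_ | m)))
  · norm_num
  · norm_num [TwoBounded.R1]
  · norm_num [TwoBounded.R1, TwoBounded.R2]
  · norm_num [TwoBounded.R2, TwoBounded.R3]
  · have h1 : m + 1 + 1 + 1 + 1 = m + 4 := by omega
    rw [h1]
    rw [if_neg (show ¬(m+4 = 0) by omega), if_pos (show (1:ℕ) ≤ m+4 by omega),
      if_pos (show (3:ℕ) ≤ m+4 by omega), if_neg (show ¬(m+4 = 1) by omega)]
    rw [coeff_mk, coeff_mk]
    rw [show m+4-1 = m+3 from rfl, show m+4-3 = m+1 from rfl]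
    rw [if_neg (show ¬(m+3 = 0) by omega), if_neg (show ¬(m+1 = 0) by omega)]
    rw [TwoBounded.Rrec m]
    push_cast
    ring
end

section
/- Let F_n be the number of 3-bounded anchored permutations of [n], G_n the number of 3-bounded permutations π of [n] with π(1) ∈ {1,2} and π(n) = n, and H_n the number of 3-bounded permutations π of [n] with π(1) = 3, π(n) = n, whose first five entries are not 3,1,4,2,5. Then for all n ≥ 6, F_n = G_{n-1} + H_{n-1} + F_{n-5}. -/
/-- `numF n` = number of 3-bounded anchored permutations of `{1,…,n}`. -/
noncomputable def numF (n : ℕ) : ℕ := numAnchored 3 n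

/-- `numG n` = number of 3-bounded permutations of `{1,…,n}` starting at `1` or `2`
(zero-indexed value `0` or `1`) and ending at `n`. -/
noncomputable def numG (n : ℕ) : ℕ :=
  Nat.card {π : Equiv.Perm (Fin n) // IsKBounded 3 n π ∧
    (∀ i : Fin n, (i : ℕ) = 0 → ((π i : ℕ) = 0 ∨ (π i : ℕ) = 1)) ∧
    (∀ i : Fin n, (i : ℕ) = n - 1 → π i = i)}

/-- The first five entries are the Joker `3,1,4,2,5` (zero-indexed values `2,0,3,1,4`). -/
def StartsWithJoker (n : ℕ) (π : Equiv.Perm (Fin n)) : Prop :=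
  ∃ h : 5 ≤ n, (π ⟨0, by omega⟩ : ℕ) = 2 ∧ (π ⟨1, by omega⟩ : ℕ) = 0 ∧
    (π ⟨2, by omega⟩ : ℕ) = 3 ∧ (π ⟨3, by omega⟩ : ℕ) = 1 ∧ (π ⟨4, by omega⟩ : ℕ) = 4

/-- `numH n` = number of 3-bounded permutations of `{1,…,n}` starting at `3`
(zero-indexed value `2`), ending at `n`, and not starting with the Joker. -/
noncomputable def numH (n : ℕ) : ℕ :=
  Nat.card {π : Equiv.Perm (Fin n) // IsKBounded 3 n π ∧
    (∀ i : Fin n, (i : ℕ) = 0 → (π i : ℕ) = 2) ∧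
    (∀ i : Fin n, (i : ℕ) = n - 1 → π i = i) ∧ ¬ StartsWithJoker n π}

open Equiv Fin

lemma forall_val_eq_imp_iff {n k : ℕ} (hk : k < n) {P : Fin n → Prop} :
    (∀ i : Fin n, (i : ℕ) = k → P i) ↔ P ⟨k, hk⟩ :=
  ⟨fun h => h _ rfl, fun h i hik => by obtain ⟨i, hi⟩ := i; subst hik; exact h⟩

lemma Nat.card_subtype_eq_card_and_add_card_and_not {α : Type*} [Finite α] (p q : α → Prop) :
    Nat.card {x // p x} = Nat.card {x // p x ∧ q x} + Nat.card {x // p x ∧ ¬ q x} := by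
  classical
  rw [← Nat.card_sum]
  exact Nat.card_congr ((Equiv.sumCompl fun x : {x // p x} => q x).symm.trans
    ((subtypeSubtypeEquivSubtypeInter p q).sumCongr
      (subtypeSubtypeEquivSubtypeInter p fun x => ¬ q x)))

section Block

variable {s m : ℕ}

def blockPerm (v : Perm (Fin s)) (τ : Perm (Fin m)) : Perm (Fin (s + m)) :=
  finSumFinEquiv.permCongr (v.sumCongr τ)

@[simp]
lemma blockPerm_castAdd (v : Perm (Fin s)) (τ : Perm (Fin m)) (i : Fin s) :
    blockPerm v τ (castAdd m i) = castAdd m (v i) := by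
  simp [blockPerm]

@[simp]
lemma blockPerm_natAdd (v : Perm (Fin s)) (τ : Perm (Fin m)) (j : Fin m) :
    blockPerm v τ (natAdd s j) = natAdd s (τ j) := by
  simp [blockPerm]

lemma blockPerm_injective (v : Perm (Fin s)) : Function.Injective (blockPerm (m := m) v) :=
  fun τ τ' h => Equiv.ext fun j => natAdd_injective m s (by
    simpa using Equiv.congr_fun h (natAdd s j))

lemma exists_blockPerm_eq {v : Perm (Fin s)} {π : Perm (Fin (s + m))}
    (hπ : ∀ i, π (castAdd m i) = castAdd m (v i)) : ∃ τ, blockPerm v τ = π := by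
  set σ := finSumFinEquiv.symm.permCongr π
  have hσ : Set.MapsTo σ (Set.range Sum.inl) (Set.range Sum.inl) := by
    rintro _ ⟨i, rfl⟩
    exact ⟨v i, by simp [σ, hπ]⟩
  obtain ⟨⟨v', τ⟩, hvτ⟩ := Perm.mem_sumCongrHom_range_of_perm_mapsTo_inl hσ
  refine ⟨τ, ?_⟩
  have hπσ : π = finSumFinEquiv.permCongr σ := by ext x; simp [σ]
  have hv : v' = v := Equiv.ext fun i => by
    simpa [σ, hπ] using Equiv.congr_fun hvτ (Sum.inl i)
  rw [hπσ, ← hvτ, ← hv]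
  rfl

lemma card_subtype_blockPerm (v : Perm (Fin s)) (P : Perm (Fin (s + m)) → Prop) :
    Nat.card {τ : Perm (Fin m) // P (blockPerm v τ)} =
      Nat.card {π : Perm (Fin (s + m)) // (∀ i, π (castAdd m i) = castAdd m (v i)) ∧ P π} :=
  Nat.card_congr <| Equiv.ofBijective (fun τ => ⟨blockPerm v τ, by simp, τ.2⟩)
    ⟨fun τ τ' h => Subtype.ext (blockPerm_injective v (congrArg Subtype.val h)),
      fun ⟨π, hpre, hP⟩ => by
        obtain ⟨τ, rfl⟩ := exists_blockPerm_eq hpre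
        exact ⟨⟨τ, hP⟩, rfl⟩⟩

lemma isKBounded_blockPerm_iff {k : ℕ} (v : Perm (Fin s)) (τ : Perm (Fin m)) :
    IsKBounded k (s + m) (blockPerm v τ) ↔ IsKBounded k s v ∧ IsKBounded k m τ ∧
      ∀ (a : Fin s) (b : Fin m), (a : ℕ) + 1 = s → (b : ℕ) = 0 →
        (((s + τ b : ℕ) : ℤ) - ((v a : ℕ) : ℤ)).natAbs ≤ k := by
  constructor
  · intro h
    refine ⟨fun i j hij => ?_, fun i j hij => ?_, fun a b ha hb => ?_⟩
    · simpa using h (castAdd m i) (castAdd m j) (by simpa using hij)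
    · simpa using h (natAdd s i) (natAdd s j) (by simp only [val_natAdd]; omega)
    · simpa using h (castAdd m a) (natAdd s b) (by simp only [val_castAdd, val_natAdd]; omega)
  · rintro ⟨hv, hτ, hseam⟩ i j hij
    induction i using Fin.addCases with
    | left a =>
      induction j using Fin.addCases with
      | left b => simpa using hv a b (by simpa using hij)
      | right b =>
        simp only [val_castAdd, val_natAdd] at hij
        simpa using hseam a b (by omega) (by omega)
    | right a =>
      induction j using Fin.addCases with
      | left b => simp only [val_castAdd, val_natAdd] at hij; omega
      | right b => simpa using hτ a b (by simp only [val_natAdd] at hij; omega)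

end Block

def FixesLast (n : ℕ) (π : Perm (Fin n)) : Prop :=
  ∀ i : Fin n, (i : ℕ) = n - 1 → π i = i

lemma fixesLast_blockPerm_iff {s m : ℕ} (hm : 0 < m) (v : Perm (Fin s)) (τ : Perm (Fin m)) :
    FixesLast (s + m) (blockPerm v τ) ↔ FixesLast m τ := by
  constructor
  · intro h j hj
    exact natAdd_injective m s (by simpa using h (natAdd s j) (by simp only [val_natAdd]; omega))
  · intro h i hi
    induction i using Fin.addCases with
    | left a => simp only [val_castAdd] at hi; omega
    | right b => simp [h b (by simp only [val_natAdd] at hi; omega)]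

lemma isAnchored_iff_fixesLast {n : ℕ} (hn : 0 < n) (π : Perm (Fin n)) :
    IsAnchored n π ↔ π ⟨0, hn⟩ = ⟨0, hn⟩ ∧ FixesLast n π := by
  rw [IsAnchored, forall_and, forall_val_eq_imp_iff hn, FixesLast]

lemma numF_one_add {n : ℕ} (hn : 0 < n) :
    numF (1 + n) = Nat.card {σ : Perm (Fin n) // IsKBounded 3 n σ ∧
      (∀ i : Fin n, (i : ℕ) = 0 → (σ i : ℕ) ≤ 2) ∧ FixesLast n σ} := by
  calc numF (1 + n)
      = Nat.card {π : Perm (Fin (1 + n)) //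
          (∀ i, π (castAdd n i) = castAdd n ((1 : Perm (Fin 1)) i)) ∧
          IsKBounded 3 (1 + n) π ∧ FixesLast (1 + n) π} :=
        Nat.card_congr <| subtypeEquivRight fun π => by
          rw [isAnchored_iff_fixesLast (by omega), Fin.forall_fin_one]
          exact ⟨fun ⟨hb, h0, hl⟩ => ⟨h0, hb, hl⟩, fun ⟨h0, hb, hl⟩ => ⟨hb, h0, hl⟩⟩
    _ = Nat.card {σ : Perm (Fin n) // IsKBounded 3 (1 + n) (blockPerm 1 σ) ∧
          FixesLast (1 + n) (blockPerm 1 σ)} := (card_subtype_blockPerm _ _).symm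
    _ = _ := Nat.card_congr <| subtypeEquivRight fun σ => by
          rw [isKBounded_blockPerm_iff, fixesLast_blockPerm_iff hn, Fin.forall_fin_one]
          have hseam : (∀ b : Fin n, ((0 : Fin 1) : ℕ) + 1 = 1 → (b : ℕ) = 0 →
              (((1 + σ b : ℕ) : ℤ) - ((((1 : Perm (Fin 1)) 0 : Fin 1) : ℕ) : ℤ)).natAbs ≤ 3) ↔
              ∀ i : Fin n, (i : ℕ) = 0 → (σ i : ℕ) ≤ 2 :=
            forall_congr' fun b => by omega
          have hone : IsKBounded 3 1 1 := fun i j hij => by omega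
          rw [hseam]
          tauto

/-- The first four entries `3,1,4,2` of the Joker, zero-indexed; its fifth entry `5` is the first
entry of the block that follows. -/
def joker : Perm (Fin 4) := ⟨![2, 0, 3, 1], ![1, 3, 0, 2], by decide, by decide⟩

lemma isKBounded_joker : IsKBounded 3 4 joker := by
  unfold IsKBounded joker; decide

lemma startsWithJoker_iff {m : ℕ} (hm : 0 < m) (σ : Perm (Fin (4 + m))) :
    StartsWithJoker (4 + m) σ ↔
      (∀ i, σ (castAdd m i) = castAdd m (joker i)) ∧ (σ (natAdd 4 ⟨0, hm⟩) : ℕ) = 4 := by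
  simp only [StartsWithJoker, Fin.forall_fin_succ, Fin.ext_iff, IsEmpty.forall_iff]
  exact ⟨fun ⟨_, h0, h1, h2, h3, h4⟩ => ⟨⟨h0, h1, h2, h3, trivial⟩, h4⟩,
    fun ⟨⟨h0, h1, h2, h3, _⟩, h4⟩ => ⟨by omega, h0, h1, h2, h3, h4⟩⟩

lemma card_startsWithJoker {m : ℕ} (hm : 0 < m) :
    Nat.card {σ : Perm (Fin (4 + m)) // IsKBounded 3 (4 + m) σ ∧ FixesLast (4 + m) σ ∧
      StartsWithJoker (4 + m) σ} = numF m := by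
  calc _ = Nat.card {σ : Perm (Fin (4 + m)) // (∀ i, σ (castAdd m i) = castAdd m (joker i)) ∧
          IsKBounded 3 (4 + m) σ ∧ FixesLast (4 + m) σ ∧ (σ (natAdd 4 ⟨0, hm⟩) : ℕ) = 4} :=
        Nat.card_congr <| subtypeEquivRight fun σ => by rw [startsWithJoker_iff hm]; tauto
    _ = Nat.card {τ : Perm (Fin m) // IsKBounded 3 (4 + m) (blockPerm joker τ) ∧
          FixesLast (4 + m) (blockPerm joker τ) ∧
          (blockPerm joker τ (natAdd 4 ⟨0, hm⟩) : ℕ) = 4} :=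
        (card_subtype_blockPerm _ _).symm
    _ = numF m := Nat.card_congr <| subtypeEquivRight fun τ => by
        -- the fourth entry of the Joker is 2, so the step to the fifth entry forces it to be 5
        have hseam : (∀ (a : Fin 4) (b : Fin m), (a : ℕ) + 1 = 4 → (b : ℕ) = 0 →
            (((4 + τ b : ℕ) : ℤ) - ((joker a : ℕ) : ℤ)).natAbs ≤ 3) ↔ (τ ⟨0, hm⟩ : ℕ) = 0 := by
          have hlast : (joker 3 : ℕ) = 1 := rfl
          constructor
          · intro h
            have := h 3 ⟨0, hm⟩ rfl rfl
            omega
          · intro h a b ha hb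
            obtain rfl : a = 3 := by omega
            obtain rfl : b = ⟨0, hm⟩ := Fin.ext hb
            omega
        have hfifth : 4 + (τ ⟨0, hm⟩ : ℕ) = 4 ↔ (τ ⟨0, hm⟩ : ℕ) = 0 := by omega
        rw [isKBounded_blockPerm_iff, fixesLast_blockPerm_iff hm, blockPerm_natAdd, val_natAdd,
          hseam, hfifth, isAnchored_iff_fixesLast hm, Fin.ext_iff]
        simp only [isKBounded_joker, true_and]
        tauto

lemma card_first_le_two {n : ℕ} (hn : 0 < n) :
    Nat.card {σ : Perm (Fin n) // IsKBounded 3 n σ ∧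
      (∀ i : Fin n, (i : ℕ) = 0 → (σ i : ℕ) ≤ 2) ∧ FixesLast n σ} =
    numG n + Nat.card {σ : Perm (Fin n) // IsKBounded 3 n σ ∧
      (∀ i : Fin n, (i : ℕ) = 0 → (σ i : ℕ) = 2) ∧ FixesLast n σ} := by
  rw [Nat.card_subtype_eq_card_and_add_card_and_not _ fun σ : Perm (Fin n) => (σ ⟨0, hn⟩ : ℕ) ≤ 1]
  unfold numG
  congr 1 <;> refine Nat.card_congr (subtypeEquivRight fun σ => ?_) <;>
    simp only [forall_val_eq_imp_iff hn] <;>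
    exact ⟨fun ⟨⟨hb, _, hl⟩, _⟩ => ⟨hb, by omega, hl⟩,
      fun ⟨hb, _, hl⟩ => ⟨⟨hb, by omega, hl⟩, by omega⟩⟩

lemma card_first_eq_two {m : ℕ} (hm : 0 < m) :
    Nat.card {σ : Perm (Fin (4 + m)) // IsKBounded 3 (4 + m) σ ∧
      (∀ i : Fin (4 + m), (i : ℕ) = 0 → (σ i : ℕ) = 2) ∧ FixesLast (4 + m) σ} =
    numH (4 + m) + numF m := by
  rw [Nat.card_subtype_eq_card_and_add_card_and_not _ (StartsWithJoker (4 + m)), add_comm,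
    ← card_startsWithJoker hm]
  unfold numH
  congr 1 <;> refine Nat.card_congr (subtypeEquivRight fun σ => ?_)
  · exact and_assoc.trans (and_congr_right fun _ => and_assoc)
  · rw [forall_val_eq_imp_iff (by omega)]
    exact ⟨fun ⟨⟨hb, _, hl⟩, hj⟩ => ⟨hb, hl, hj⟩, fun ⟨hb, hl, hj⟩ => ⟨⟨hb, hj.2.1, hl⟩, hj⟩⟩

theorem F_recurrence (n : ℕ) (hn : 6 ≤ n) :
    numF n = numG (n - 1) + numH (n - 1) + numF (n - 5) := by
  obtain ⟨m, rfl⟩ : ∃ m, n = 1 + (4 + m) := ⟨n - 5, by omega⟩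
  have hm : 0 < m := by omega
  rw [numF_one_add (by omega), card_first_le_two (by omega), card_first_eq_two hm,
    show 1 + (4 + m) - 1 = 4 + m by omega, show 1 + (4 + m) - 5 = m by omega, add_assoc]
end

section
/- Let F_n be the number of 3-bounded anchored permutations of [n], G_n the number of 3-bounded permutations π of [n] with π(1) ∈ {1,2} and π(n) = n, and H_n the number of 3-bounded permutations π of [n] with π(1) = 3, π(n) = n, whose first five entries are not 3,1,4,2,5. Then for all n ≥ 6, H_n = F_{n-3} + G_{n-3} + F_{n-4} + G_{n-5} + H_{n-3}. -/
/-!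
Values are counted from `0`. In a permutation counted by `numH n` (first entry `2`, not starting
with the Joker `2, 0, 3, 1, 4`) the entries `0` and `1` are adjacent, and unless they sit at
positions `1, 2` they are flanked as `x + 3, x, y, y + 3` with `{x, y} = {0, 1}`. So the
permutation begins with
* `2, 1, 0` or `2, 3, 0, 1`, followed by an anchored permutation raised by `3` resp. `4`;
* `2, 0, 1` or `2, 4, 1, 0, 3`, followed by a raised permutation starting with its least or
  second least value;
* `2, 5`, and then deleting `2, 0, 1` and lowering every other entry by `3` leaves a permutation
  counted by `numH (n - 3)`, from whose adjacent pair `x, y` the block `x + 3, x, y, y + 3` is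
  rebuilt.
-/

open Function Set

lemma Function.Injective.exists_lt_apply_eq {f : ℕ → ℕ} (hf : Injective f) {k : ℕ}
    (hk : MapsTo f (Iio k) (Iio k)) {v : ℕ} (hv : v < k) : ∃ j < k, f j = v :=
  (((finite_Iio k).injOn_iff_bijOn_of_mapsTo hk).mp hf.injOn).surjOn hv

lemma Function.Injective.le_apply {f : ℕ → ℕ} (hf : Injective f) {k : ℕ}
    (hk : MapsTo f (Iio k) (Iio k)) {j : ℕ} (hj : k ≤ j) : k ≤ f j := by
  by_contra h
  obtain ⟨i, hi, hij⟩ := hf.exists_lt_apply_eq hk (not_le.mp h)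
  have := hf hij
  omega

section Encoding

def extendPerm {n : ℕ} (π : Equiv.Perm (Fin n)) (j : ℕ) : ℕ :=
  if h : j < n then π ⟨j, h⟩ else j

section extendPerm

variable {n : ℕ} (π : Equiv.Perm (Fin n))

lemma extendPerm_of_lt {j : ℕ} (h : j < n) : extendPerm π j = π ⟨j, h⟩ := dif_pos h

lemma extendPerm_of_le {j : ℕ} (h : n ≤ j) : extendPerm π j = j := dif_neg (by omega)

lemma extendPerm_injective : Injective (extendPerm (n := n)) := by
  intro π σ h
  ext i
  simpa [extendPerm_of_lt _ i.2] using congrFun h i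

lemma extendPerm_apply_injective : Injective (extendPerm π) := by
  intro a b h
  rcases lt_or_ge a n with ha | ha <;> rcases lt_or_ge b n with hb | hb
  · rw [extendPerm_of_lt _ ha, extendPerm_of_lt _ hb] at h
    simpa using π.injective (Fin.ext h)
  · rw [extendPerm_of_lt _ ha, extendPerm_of_le _ hb] at h
    exact absurd (π ⟨a, ha⟩).2 (by omega)
  · rw [extendPerm_of_le _ ha, extendPerm_of_lt _ hb] at h
    exact absurd (π ⟨b, hb⟩).2 (by omega)
  · rwa [extendPerm_of_le _ ha, extendPerm_of_le _ hb] at h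

lemma forall_val_eq_imp_iff_s13 {j : ℕ} (hj : j < n) (p : ℕ → Prop) :
    (∀ i : Fin n, (i : ℕ) = j → p (π i)) ↔ p (extendPerm π j) := by
  rw [extendPerm_of_lt _ hj]
  exact ⟨fun h => h _ rfl, by rintro h i rfl; exact h⟩

lemma forall_val_eq_imp_apply_eq_iff {j : ℕ} (hj : j < n) :
    (∀ i : Fin n, (i : ℕ) = j → π i = i) ↔ extendPerm π j = j := by
  rw [← forall_val_eq_imp_iff_s13 π hj (· = j)]
  exact forall_congr' fun i => imp_congr_right fun hi => by rw [Fin.ext_iff, hi]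

end extendPerm

/-- A 3-bounded permutation of `[0, n)` ending at `n - 1`, extended by the identity to all of `ℕ`;
fixing `n - 1` is what lets the step condition hold at every position. -/
structure IsBoundedPerm (n : ℕ) (f : ℕ → ℕ) : Prop where
  injective : Injective f
  apply_eq_self : ∀ j, n ≤ j + 1 → f j = j
  step : ∀ j, f (j + 1) ≤ f j + 3 ∧ f j ≤ f (j + 1) + 3

namespace IsBoundedPerm

variable {n : ℕ} {f : ℕ → ℕ} (hf : IsBoundedPerm n f)
include hf

lemma apply_lt {m j : ℕ} (hm : n ≤ m + 1) (hj : j < m) : f j < m := by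
  by_contra h
  have := hf.injective (hf.apply_eq_self (f j) (by omega))
  omega

lemma surjective : Surjective f := by
  intro v
  by_cases hv : n ≤ v + 1
  · exact ⟨v, hf.apply_eq_self v hv⟩
  obtain ⟨j, -, hj⟩ :=
    hf.injective.exists_lt_apply_eq (fun j hj => hf.apply_lt (by omega) hj) (by omega : v < n - 1)
  exact ⟨j, hj⟩

lemma exists_extendPerm_eq : ∃ π : Equiv.Perm (Fin n), extendPerm π = f := by
  let g : Fin n → Fin n := fun i => ⟨f i, hf.apply_lt (by omega) i.2⟩
  have hg : Injective g := fun a b h => Fin.ext (hf.injective (congrArg Fin.val h))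
  refine ⟨Equiv.ofBijective g (Finite.injective_iff_bijective.mp hg), funext fun j => ?_⟩
  rcases lt_or_ge j n with hj | hj
  · rw [extendPerm_of_lt _ hj]; rfl
  · rw [extendPerm_of_le _ hj, hf.apply_eq_self j (by omega)]

end IsBoundedPerm

lemma isBoundedPerm_extendPerm_iff {n : ℕ} (hn : 1 ≤ n) (π : Equiv.Perm (Fin n)) :
    IsBoundedPerm n (extendPerm π) ↔
      IsKBounded 3 n π ∧ ∀ i : Fin n, (i : ℕ) = n - 1 → π i = i := by
  rw [forall_val_eq_imp_apply_eq_iff π (j := n - 1) (by omega)]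
  constructor
  · intro hf
    refine ⟨fun i j hij => ?_, hf.apply_eq_self _ (by omega)⟩
    have := hf.step i
    rw [← hij, extendPerm_of_lt _ i.2, extendPerm_of_lt _ j.2] at this
    simp only [Fin.eta] at this
    omega
  · intro ⟨hb, he⟩
    refine ⟨extendPerm_apply_injective π, fun j hj => ?_, fun j => ?_⟩
    · rcases eq_or_lt_of_le hj with h | h
      · rw [← (by omega : n - 1 = j), he]
      · exact extendPerm_of_le π (by omega)
    · rcases lt_or_ge (j + 1) n with h | h
      · rw [extendPerm_of_lt _ h, extendPerm_of_lt _ (by omega : j < n)]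
        have := hb ⟨j, by omega⟩ ⟨j + 1, h⟩ rfl
        omega
      · rw [extendPerm_of_le π h]
        rcases eq_or_lt_of_le h with h' | h'
        · rw [← (by omega : n - 1 = j), he]; omega
        · rw [extendPerm_of_le π (by omega)]; omega

def StartsWith (pre : List ℕ) (f : ℕ → ℕ) : Prop := ∀ j < pre.length, f j = pre.getD j 0

lemma startsWithJoker_iff_s13 {n : ℕ} {π : Equiv.Perm (Fin n)}
    (hf : IsBoundedPerm n (extendPerm π)) :
    StartsWithJoker n π ↔ StartsWith [2, 0, 3, 1, 4] (extendPerm π) := by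
  constructor
  · rintro ⟨h5, h⟩ j hj
    simp only [List.length_cons, List.length_nil] at hj
    rw [extendPerm_of_lt π (by omega)]
    interval_cases j <;> simp [h]
  · intro h
    have h5 : 5 ≤ n := by
      by_contra h5
      have := h 3 (by simp)
      rw [hf.apply_eq_self 3 (by omega)] at this
      simp at this
    refine ⟨h5, ?_, ?_, ?_, ?_, ?_⟩
    · simpa [extendPerm_of_lt π (by omega : 0 < n)] using h 0 (by simp)
    · simpa [extendPerm_of_lt π (by omega : 1 < n)] using h 1 (by simp)
    · simpa [extendPerm_of_lt π (by omega : 2 < n)] using h 2 (by simp)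
    · simpa [extendPerm_of_lt π (by omega : 3 < n)] using h 3 (by simp)
    · simpa [extendPerm_of_lt π (by omega : 4 < n)] using h 4 (by simp)

lemma natCard_subtype_eq {n : ℕ} {P : Equiv.Perm (Fin n) → Prop} {Q : (ℕ → ℕ) → Prop}
    (h : ∀ π, P π ↔ IsBoundedPerm n (extendPerm π) ∧ Q (extendPerm π)) :
    Nat.card {π // P π} = Nat.card {f | IsBoundedPerm n f ∧ Q f} := by
  have : {f | IsBoundedPerm n f ∧ Q f} = extendPerm '' {π | P π} := by
    ext f
    refine ⟨fun ⟨hf, hq⟩ => ?_, ?_⟩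
    · obtain ⟨π, rfl⟩ := hf.exists_extendPerm_eq
      exact ⟨π, (h π).2 ⟨hf, hq⟩, rfl⟩
    · rintro ⟨π, hπ, rfl⟩
      exact (h π).1 hπ
  rw [this, Nat.card_image_of_injective extendPerm_injective]
  rfl

def setF (n : ℕ) : Set (ℕ → ℕ) := {f | IsBoundedPerm n f ∧ f 0 = 0}

def setG (n : ℕ) : Set (ℕ → ℕ) := {f | IsBoundedPerm n f ∧ f 0 ≤ 1}

def setH (n : ℕ) : Set (ℕ → ℕ) :=
  {f | IsBoundedPerm n f ∧ f 0 = 2 ∧ ¬ StartsWith [2, 0, 3, 1, 4] f}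

lemma finite_setOf_isBoundedPerm (n : ℕ) : {f | IsBoundedPerm n f}.Finite :=
  (finite_range extendPerm).subset fun _ hf => hf.exists_extendPerm_eq

instance (n : ℕ) : Finite (setF n) :=
  ((finite_setOf_isBoundedPerm n).subset fun _ hf => hf.1).to_subtype

instance (n : ℕ) : Finite (setG n) :=
  ((finite_setOf_isBoundedPerm n).subset fun _ hf => hf.1).to_subtype

instance (n : ℕ) : Finite (setH n) :=
  ((finite_setOf_isBoundedPerm n).subset fun _ hf => hf.1).to_subtype

lemma numF_eq_natCard {n : ℕ} (hn : 1 ≤ n) : numF n = Nat.card (setF n) :=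
  natCard_subtype_eq fun π => by
    rw [isBoundedPerm_extendPerm_iff hn, IsAnchored, forall_and,
      forall_val_eq_imp_apply_eq_iff π (j := 0) hn, and_assoc, and_comm (a := _ = 0)]

lemma numG_eq_natCard {n : ℕ} (hn : 1 ≤ n) : numG n = Nat.card (setG n) :=
  natCard_subtype_eq fun π => by
    rw [isBoundedPerm_extendPerm_iff hn, forall_val_eq_imp_iff_s13 π hn (fun v => v = 0 ∨ v = 1),
      ← Nat.le_one_iff_eq_zero_or_eq_one, and_comm (a := _ ≤ 1), and_assoc]

lemma numH_eq_natCard {n : ℕ} (hn : 1 ≤ n) : numH n = Nat.card (setH n) :=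
  natCard_subtype_eq fun π => by
    have h0 := forall_val_eq_imp_iff_s13 π hn (· = 2)
    constructor
    · rintro ⟨hK, hZ, hL, hJ⟩
      have hf := (isBoundedPerm_extendPerm_iff hn π).2 ⟨hK, hL⟩
      exact ⟨hf, h0.1 hZ, (startsWithJoker_iff_s13 hf).not.1 hJ⟩
    · rintro ⟨hf, hZ, hJ⟩
      obtain ⟨hK, hL⟩ := (isBoundedPerm_extendPerm_iff hn π).1 hf
      exact ⟨hK, h0.2 hZ, hL, (startsWithJoker_iff_s13 hf).not.2 hJ⟩

end Encoding

section Prefix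

def prepend (pre : List ℕ) (g : ℕ → ℕ) (j : ℕ) : ℕ :=
  if j < pre.length then pre.getD j 0 else g (j - pre.length) + pre.length

def dropPrefix (k : ℕ) (f : ℕ → ℕ) (j : ℕ) : ℕ := f (j + k) - k

lemma dropPrefix_prepend (pre : List ℕ) (g : ℕ → ℕ) :
    dropPrefix pre.length (prepend pre g) = g := by
  funext j
  simp [dropPrefix, prepend]

lemma prepend_injective (pre : List ℕ) : Injective (prepend pre) :=
  LeftInverse.injective (dropPrefix_prepend pre)

lemma prepend_dropPrefix {pre : List ℕ} {f : ℕ → ℕ} (hs : StartsWith pre f)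
    (hge : ∀ j, pre.length ≤ j → pre.length ≤ f j) :
    prepend pre (dropPrefix pre.length f) = f := by
  funext j
  unfold prepend dropPrefix
  split_ifs with h
  · exact (hs j h).symm
  · rw [Nat.sub_add_cancel (show pre.length ≤ j by omega), Nat.sub_add_cancel (hge j (by omega))]

lemma getD_lt_of_perm_range {pre : List ℕ} (hperm : pre.Perm (List.range pre.length)) {j : ℕ}
    (hj : j < pre.length) : pre.getD j 0 < pre.length := by
  rw [List.getD_eq_getElem _ _ hj]
  exact List.mem_range.mp (hperm.subset (List.getElem_mem hj))

lemma IsBoundedPerm.prepend {n : ℕ} {pre : List ℕ} {g : ℕ → ℕ}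
    (hg : IsBoundedPerm (n - pre.length) g) (hlen : pre.length < n)
    (hperm : pre.Perm (List.range pre.length))
    (hchain : (pre ++ [g 0 + pre.length]).IsChain fun a b => b ≤ a + 3 ∧ a ≤ b + 3) :
    IsBoundedPerm n (prepend pre g) := by
  have hlt := fun j (hj : j < pre.length) => getD_lt_of_perm_range hperm hj
  have hnodup := hperm.nodup_iff.mpr List.nodup_range
  refine ⟨fun i j h => ?_, fun j hj => ?_, fun j => ?_⟩
  · unfold _root_.prepend at h
    split_ifs at h with hi hj hj
    · rw [List.getD_eq_getElem _ _ hi, List.getD_eq_getElem _ _ hj] at h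
      exact hnodup.getElem_inj_iff.mp h
    · have := hlt i hi; omega
    · have := hlt j hj; omega
    · have := hg.injective (show g (i - pre.length) = g (j - pre.length) by omega)
      omega
  · rw [_root_.prepend, if_neg (by omega), hg.apply_eq_self _ (by omega)]
    omega
  · have hc := List.isChain_iff_getElem.mp hchain j
    rcases lt_or_ge (j + 1) pre.length with h | h
    · simpa [_root_.prepend, h, show j < pre.length by omega, List.getElem_append_left h,
        List.getElem_append_left (show j < pre.length by omega), List.getD_eq_getElem]
        using hc (by simp; omega)
    rcases eq_or_lt_of_le h with h | h
    · simpa [_root_.prepend, ← h, List.getD_eq_getElem, show j < pre.length by omega,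
        List.getElem_append_left (show j < pre.length by omega),
        List.getElem_append_right (show pre.length ≤ j + 1 by omega)] using hc (by simp; omega)
    · have := hg.step (j - pre.length)
      simp only [_root_.prepend, if_neg (show ¬ j + 1 < pre.length by omega),
        if_neg (show ¬ j < pre.length by omega),
        show j + 1 - pre.length = j - pre.length + 1 by omega]
      omega

lemma IsBoundedPerm.dropPrefix {n k : ℕ} {f : ℕ → ℕ} (hf : IsBoundedPerm n f) (hk : k < n)
    (hmaps : MapsTo f (Iio k) (Iio k)) : IsBoundedPerm (n - k) (dropPrefix k f) := by
  have hge : ∀ j, k ≤ f (j + k) := fun j => hf.injective.le_apply hmaps (by omega)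
  refine ⟨fun i j h => ?_, fun j hj => ?_, fun j => ?_⟩
  · have := hge i; have := hge j
    have := hf.injective (show f (i + k) = f (j + k) by unfold _root_.dropPrefix at h; omega)
    omega
  · rw [_root_.dropPrefix, hf.apply_eq_self _ (by omega)]
    omega
  · have := hf.step (j + k); have := hge j; have := hge (j + 1)
    simp only [_root_.dropPrefix, show j + 1 + k = j + k + 1 by omega] at *
    omega

lemma mem_image_prepend {n : ℕ} {τ : ℕ → ℕ} {pre : List ℕ} (hτ : IsBoundedPerm n τ)
    (hne : pre ≠ []) (hlen : pre.length < n) (hperm : pre.Perm (List.range pre.length))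
    (hs : StartsWith pre τ) :
    τ ∈ prepend pre '' {σ | IsBoundedPerm (n - pre.length) σ ∧
      σ 0 + pre.length ≤ pre.getD (pre.length - 1) 0 + 3} := by
  have hmaps : MapsTo τ (Iio pre.length) (Iio pre.length) := fun j (hj : j < _) =>
    show τ j < _ from hs j hj ▸ getD_lt_of_perm_range hperm hj
  have hge := fun j (hj : pre.length ≤ j) => hτ.injective.le_apply hmaps hj
  refine ⟨dropPrefix pre.length τ, ⟨hτ.dropPrefix hlen hmaps, ?_⟩, prepend_dropPrefix hs hge⟩
  have hpos : 0 < pre.length := List.length_pos_iff.mpr hne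
  have := hτ.step (pre.length - 1)
  have := hs (pre.length - 1) (by omega)
  have := hge _ le_rfl
  rw [Nat.sub_add_cancel hpos] at *
  simp only [dropPrefix, zero_add]
  omega

end Prefix

section Block

/-- `insertBlock p σ` turns `2, P, x, y, S`, where `x = σ p` and `y = σ (p + 1)`, into
`2, 5, P + 3, x + 3, x, y, y + 3, S + 3`. -/
def insertBlock (p : ℕ) (σ : ℕ → ℕ) (j : ℕ) : ℕ :=
  if j = 0 then 2
  else if j ≤ p + 1 then σ (j - 1) + 3
  else if j = p + 2 then σ p
  else if j = p + 3 then σ (p + 1)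
  else σ (j - 3) + 3

def eraseBlock (p : ℕ) (τ : ℕ → ℕ) (j : ℕ) : ℕ :=
  if j ≤ p then τ (j + 1) - 3 else τ (j + 3) - 3

def HasBlockAt (τ : ℕ → ℕ) (p : ℕ) : Prop :=
  τ (p + 2) ≤ 1 ∧ τ (p + 3) ≤ 1 ∧ τ (p + 1) = τ (p + 2) + 3 ∧ τ (p + 4) = τ (p + 3) + 3

section insertBlock

variable {p : ℕ} {σ : ℕ → ℕ}

lemma insertBlock_zero : insertBlock p σ 0 = 2 := rfl

lemma insertBlock_succ_of_le {j : ℕ} (h : j ≤ p) : insertBlock p σ (j + 1) = σ j + 3 := by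
  simp [insertBlock, h]

lemma insertBlock_one : insertBlock p σ 1 = σ 0 + 3 :=
  insertBlock_succ_of_le (Nat.zero_le p)

lemma insertBlock_add_two : insertBlock p σ (p + 2) = σ p := by
  simp [insertBlock]

lemma insertBlock_add_three : insertBlock p σ (p + 3) = σ (p + 1) := by
  simp [insertBlock]

lemma insertBlock_add_three_of_lt {j : ℕ} (h : p < j) : insertBlock p σ (j + 3) = σ j + 3 := by
  rw [insertBlock, if_neg (by omega), if_neg (by omega), if_neg (by omega), if_neg (by omega),
    Nat.add_sub_cancel]

end insertBlock

lemma eraseBlock_insertBlock (p : ℕ) (σ : ℕ → ℕ) : eraseBlock p (insertBlock p σ) = σ := by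
  funext j
  by_cases h : j ≤ p
  · simp [eraseBlock, h, insertBlock_succ_of_le h]
  · simp [eraseBlock, h, insertBlock_add_three_of_lt (not_le.mp h)]

lemma hasBlockAt_insertBlock {p : ℕ} {σ : ℕ → ℕ} (hx : σ p ≤ 1) (hy : σ (p + 1) ≤ 1) :
    HasBlockAt (insertBlock p σ) p := by
  refine ⟨?_, ?_, ?_, ?_⟩
  · rwa [insertBlock_add_two]
  · rwa [insertBlock_add_three]
  · rw [insertBlock_succ_of_le le_rfl, insertBlock_add_two]
  · rw [insertBlock_add_three, show p + 4 = (p + 1) + 3 by omega,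
      insertBlock_add_three_of_lt (by omega)]

lemma three_le_apply_of_adjacent {τ : ℕ → ℕ} {p j : ℕ} (hinj : Injective τ) (h0 : τ 0 = 2)
    (hx : τ (p + 2) ≤ 1) (hy : τ (p + 3) ≤ 1) (hj0 : j ≠ 0) (hj2 : j ≠ p + 2)
    (hj3 : j ≠ p + 3) : 3 ≤ τ j := by
  grind

lemma insertBlock_step {p : ℕ} {σ : ℕ → ℕ}
    (hσ : ∀ j, σ (j + 1) ≤ σ j + 3 ∧ σ j ≤ σ (j + 1) + 3) (h0 : σ 0 = 2) (hx : σ p ≤ 1)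
    (hy : σ (p + 1) ≤ 1) (j : ℕ) :
    insertBlock p σ (j + 1) ≤ insertBlock p σ j + 3 ∧
      insertBlock p σ j ≤ insertBlock p σ (j + 1) + 3 := by
  rcases j with _ | j
  · rw [insertBlock_zero, insertBlock_one]
    omega
  rcases lt_trichotomy j p with h | rfl | h
  · have := hσ j
    rw [insertBlock_succ_of_le h.le, insertBlock_succ_of_le (show j + 1 ≤ p from h)]
    omega
  · rw [insertBlock_succ_of_le le_rfl, insertBlock_add_two]
    omega
  rcases lt_trichotomy j (p + 2) with h' | rfl | h'
  · obtain rfl : j = p + 1 := by omega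
    rw [insertBlock_add_two, insertBlock_add_three]
    omega
  · rw [insertBlock_add_three, show p + 2 + 1 + 1 = (p + 1) + 3 by omega,
      insertBlock_add_three_of_lt (by omega)]
    omega
  · obtain ⟨i, rfl⟩ : ∃ i, j = i + 2 := ⟨j - 2, by omega⟩
    have := hσ i
    rw [show i + 2 + 1 = i + 3 by omega, show i + 3 + 1 = (i + 1) + 3 by omega,
      insertBlock_add_three_of_lt (by omega), insertBlock_add_three_of_lt (by omega)]
    omega

lemma IsBoundedPerm.insertBlock {m p : ℕ} {σ : ℕ → ℕ} (hσ : IsBoundedPerm m σ) (h0 : σ 0 = 2)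
    (hx : σ p ≤ 1) (hy : σ (p + 1) ≤ 1) : IsBoundedPerm (m + 3) (insertBlock p σ) := by
  have hinj := hσ.injective
  have hp : p + 3 ≤ m := by
    by_contra h
    have := hσ.apply_eq_self (p + 1) (by omega)
    have : p ≠ 0 := by rintro rfl; omega
    omega
  refine ⟨fun i j h => ?_, fun j hj => ?_, insertBlock_step hσ.step h0 hx hy⟩
  · unfold _root_.insertBlock at h
    split_ifs at h <;> first
      | omega
      | (have := hinj h; omega)
      | (have := hinj (Nat.add_right_cancel h); omega)
  · rw [← Nat.sub_add_cancel (show 3 ≤ j by omega), insertBlock_add_three_of_lt (by omega),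
      hσ.apply_eq_self _ (by omega)]

lemma IsBoundedPerm.eraseBlock {n p : ℕ} {τ : ℕ → ℕ} (hτ : IsBoundedPerm n τ) (h0 : τ 0 = 2)
    (hb : HasBlockAt τ p) : IsBoundedPerm (n - 3) (eraseBlock p τ) := by
  have hinj := hτ.injective
  have h3 := fun j => three_le_apply_of_adjacent (j := j) hinj h0 hb.1 hb.2.1
  have hp : p + 5 ≤ n := by
    by_contra h
    have := hτ.apply_eq_self (p + 3) (by omega)
    unfold HasBlockAt at hb
    omega
  refine ⟨fun i j h => ?_, fun j hj => ?_, fun j => ?_⟩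
  · unfold _root_.eraseBlock at h
    have := h3 (i + 1); have := h3 (j + 1); have := h3 (i + 3); have := h3 (j + 3)
    split_ifs at h <;> first
      | (have := hinj (show τ (i + 1) = τ (j + 1) by omega); omega)
      | (have := hinj (show τ (i + 1) = τ (j + 3) by omega); omega)
      | (have := hinj (show τ (i + 3) = τ (j + 1) by omega); omega)
      | (have := hinj (show τ (i + 3) = τ (j + 3) by omega); omega)
  · rw [_root_.eraseBlock, if_neg (by omega), hτ.apply_eq_self _ (by omega)]
    omega
  · have := hτ.step (j + 1); have := hτ.step (j + 3)
    have := h3 (j + 1); have := h3 (j + 2); have := h3 (j + 3); have := h3 (j + 4)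
    unfold HasBlockAt at hb
    unfold _root_.eraseBlock
    split_ifs <;> grind

lemma insertBlock_eraseBlock {p : ℕ} {τ : ℕ → ℕ} (hinj : Injective τ) (h0 : τ 0 = 2)
    (hb : HasBlockAt τ p) : insertBlock p (eraseBlock p τ) = τ := by
  funext j
  have := three_le_apply_of_adjacent (j := j) hinj h0 hb.1 hb.2.1
  unfold HasBlockAt at hb
  unfold insertBlock eraseBlock
  split_ifs <;> grind

end Block

section Classification

variable {n : ℕ} {τ : ℕ → ℕ}

lemma IsBoundedPerm.neighbours (hf : IsBoundedPerm n τ) (q : ℕ) :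
    τ q ≤ τ (q + 1) + 3 ∧ τ (q + 2) ≤ τ (q + 1) + 3 ∧ τ q ≠ τ (q + 2) :=
  ⟨(hf.step q).2, (hf.step (q + 1)).1, hf.injective.ne (by omega)⟩

lemma exists_adjacent_le_one (hτ : τ ∈ setH n) : ∃ p, τ p ≤ 1 ∧ τ (p + 1) ≤ 1 := by
  obtain ⟨hf, h0, hJ⟩ := hτ
  have hinj := hf.injective
  obtain ⟨a, ha⟩ := hf.surjective 0
  obtain ⟨b, hb⟩ := hf.surjective 1
  obtain ⟨a, rfl⟩ := Nat.exists_eq_add_one_of_ne_zero (n := a) (by rintro rfl; omega)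
  obtain ⟨b, rfl⟩ := Nat.exists_eq_add_one_of_ne_zero (n := b) (by rintro rfl; omega)
  by_contra! hadj
  -- Otherwise `0` sits between `2` and `3`, and then `1` between `3` and `4`: the Joker.
  obtain ⟨ha2, ha3⟩ : τ a = 2 ∧ τ (a + 2) = 3 := by
    have := hf.neighbours a; have := hadj a
    have : τ (a + 1) ≤ 1 → 1 < τ (a + 2) := hadj (a + 1)
    have : τ (a + 2) ≠ 2 := fun h => absurd (hinj (h.trans h0.symm)) (by omega)
    omega
  obtain rfl : a = 0 := hinj (ha2.trans h0.symm)
  obtain ⟨hb3, hb4⟩ : τ b = 3 ∧ τ (b + 2) = 4 := by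
    have := hf.neighbours b; have := hadj b
    have : τ (b + 1) ≤ 1 → 1 < τ (b + 2) := hadj (b + 1)
    have : b ≠ 0 := by rintro rfl; omega
    have : τ b ≠ 2 := fun h => this (hinj (h.trans h0.symm))
    have : τ (b + 2) ≠ 2 := fun h => absurd (hinj (h.trans h0.symm)) (by omega)
    have : τ (b + 2) ≠ 3 := fun h => by have := hinj (h.trans ha3.symm); omega
    omega
  obtain rfl : b = 2 := hinj (hb3.trans ha3.symm)
  refine hJ fun j hj => ?_
  simp only [List.length_cons, List.length_nil] at hj
  interval_cases j
  exacts [h0, ha, ha3, hb, hb4]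

lemma hasBlockAt_of_adjacent {p : ℕ} (hτ : τ ∈ setH n) (hx : τ (p + 2) ≤ 1)
    (hy : τ (p + 3) ≤ 1) : HasBlockAt τ p := by
  obtain ⟨hf, h0, -⟩ := hτ
  have hinj := hf.injective
  have := three_le_apply_of_adjacent (j := p + 1) hinj h0 hx hy (by omega) (by omega) (by omega)
  have := three_le_apply_of_adjacent (j := p + 4) hinj h0 hx hy (by omega) (by omega) (by omega)
  have : τ (p + 2) ≤ τ (p + 1) + 3 ∧ τ (p + 1) ≤ τ (p + 2) + 3 := hf.step (p + 1)
  have : τ (p + 4) ≤ τ (p + 3) + 3 ∧ τ (p + 3) ≤ τ (p + 4) + 3 := hf.step (p + 3)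
  have := hinj.ne (show p + 1 ≠ p + 4 by omega)
  have := hinj.ne (show p + 2 ≠ p + 3 by omega)
  unfold HasBlockAt
  omega

lemma mem_setH_cases (hτ : τ ∈ setH n) :
    StartsWith [2, 1, 0] τ ∨ StartsWith [2, 0, 1] τ ∨ StartsWith [2, 3, 0, 1] τ ∨
      StartsWith [2, 4, 1, 0, 3] τ ∨ (τ 1 = 5 ∧ ∃ p, HasBlockAt τ p) := by
  obtain ⟨p, hx, hy⟩ := exists_adjacent_le_one hτ
  have hinj := hτ.1.injective
  have h0 := hτ.2.1
  obtain rfl | rfl | ⟨p, rfl⟩ : p = 0 ∨ p = 1 ∨ ∃ q, p = q + 2 := by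
    rcases p with _ | _ | q <;> simp
  · omega
  · simp only [Nat.reduceAdd] at hy
    have : τ 1 ≠ τ 2 := fun h => by have := hinj h; omega
    rcases (by omega : τ 1 = 1 ∧ τ 2 = 0 ∨ τ 1 = 0 ∧ τ 2 = 1) with h | h
    · left; intro j hj; simp at hj; interval_cases j <;> simp [h0, h]
    · right; left; intro j hj; simp at hj; interval_cases j <;> simp [h0, h]
  have hb := hasBlockAt_of_adjacent hτ hx hy
  unfold HasBlockAt at hb
  obtain rfl | hp := Nat.eq_zero_or_pos p
  · have : τ 2 ≠ τ 3 := fun h => by have := hinj h; omega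
    simp only [zero_add] at hb
    rcases (by omega : τ 2 = 0 ∧ τ 3 = 1 ∨ τ 2 = 1 ∧ τ 3 = 0) with h | h
    · right; right; left; intro j hj; simp at hj; interval_cases j <;> simp [h0, h, hb]
    · right; right; right; left; intro j hj; simp at hj; interval_cases j <;> simp [h0, h, hb]
  · refine Or.inr (Or.inr (Or.inr (Or.inr ⟨?_, p, hb⟩)))
    have := hτ.1.step 0
    grind

noncomputable def lowPos (f : ℕ → ℕ) : ℕ := sInf {j | f j ≤ 1}

lemma lowPos_eq {f : ℕ → ℕ} {p : ℕ} (hinj : Injective f) (hx : f p ≤ 1) (hy : f (p + 1) ≤ 1) :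
    lowPos f = p :=
  le_antisymm (Nat.sInf_le hx) (le_csInf ⟨p, hx⟩ fun j (hj : f j ≤ 1) => by grind)

lemma lowPos_spec (hτ : τ ∈ setH n) : τ (lowPos τ) ≤ 1 ∧ τ (lowPos τ + 1) ≤ 1 := by
  obtain ⟨p, hx, hy⟩ := exists_adjacent_le_one hτ
  rw [lowPos_eq hτ.1.injective hx hy]
  exact ⟨hx, hy⟩

lemma not_startsWith_joker_of_adjacent {f : ℕ → ℕ} {p : ℕ} (hinj : Injective f)
    (hx : f p ≤ 1) (hy : f (p + 1) ≤ 1) : ¬ StartsWith [2, 0, 3, 1, 4] f := by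
  intro h
  have h1 := h 1 (by simp)
  have h3 := h 3 (by simp)
  simp only [List.getD_cons_succ, List.getD_cons_zero] at h1 h3
  grind

end Classification

section Counting

variable {n : ℕ}

lemma mapsTo_prepend_210 (hn : 6 ≤ n) : MapsTo (prepend [2, 1, 0]) (setF (n - 3)) (setH n) :=
  fun _ ⟨hσ, h0⟩ => ⟨hσ.prepend (pre := [2, 1, 0]) (by simp; omega) (by decide) (by simp [h0]),
    rfl, fun h => by simpa [prepend] using h 1 (by simp)⟩

lemma mapsTo_prepend_201 (hn : 6 ≤ n) : MapsTo (prepend [2, 0, 1]) (setG (n - 3)) (setH n) :=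
  fun _ ⟨hσ, h0⟩ => ⟨hσ.prepend (pre := [2, 0, 1]) (by simp; omega) (by decide) (by simp; omega),
    rfl, fun h => by simpa [prepend] using h 2 (by simp)⟩

lemma mapsTo_prepend_2301 (hn : 6 ≤ n) : MapsTo (prepend [2, 3, 0, 1]) (setF (n - 4)) (setH n) :=
  fun _ ⟨hσ, h0⟩ => ⟨hσ.prepend (pre := [2, 3, 0, 1]) (by simp; omega) (by decide)
    (by simp [h0]), rfl, fun h => by simpa [prepend] using h 1 (by simp)⟩

lemma mapsTo_prepend_24103 (hn : 6 ≤ n) :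
    MapsTo (prepend [2, 4, 1, 0, 3]) (setG (n - 5)) (setH n) :=
  fun _ ⟨hσ, h0⟩ => ⟨hσ.prepend (pre := [2, 4, 1, 0, 3]) (by simp; omega) (by decide)
    (by simp; omega), rfl, fun h => by simpa [prepend] using h 1 (by simp)⟩

lemma mapsTo_insertBlock (hn : 3 ≤ n) :
    MapsTo (fun σ => insertBlock (lowPos σ) σ) (setH (n - 3)) (setH n) := by
  intro σ hσ
  obtain ⟨hx, hy⟩ := lowPos_spec hσ
  refine ⟨?_, insertBlock_zero, fun h => ?_⟩
  · simpa only [Nat.sub_add_cancel hn] using hσ.1.insertBlock hσ.2.1 hx hy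
  · simpa [insertBlock_one, hσ.2.1] using h 1 (by simp)

lemma injOn_insertBlock : InjOn (fun σ => insertBlock (lowPos σ) σ) (setH n) := by
  have key : ∀ σ ∈ setH n, lowPos (insertBlock (lowPos σ) σ) = lowPos σ + 2 := fun σ hσ => by
    obtain ⟨hx, hy⟩ := lowPos_spec hσ
    obtain ⟨hx', hy', -⟩ := hasBlockAt_insertBlock hx hy
    exact lowPos_eq (hσ.1.insertBlock hσ.2.1 hx hy).injective hx' hy'
  intro σ hσ σ' hσ' h
  have hp : lowPos σ = lowPos σ' := by
    have := congrArg lowPos h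
    simp only [key σ hσ, key σ' hσ'] at this
    omega
  calc σ = eraseBlock (lowPos σ) (insertBlock (lowPos σ) σ) := (eraseBlock_insertBlock _ _).symm
    _ = eraseBlock (lowPos σ') (insertBlock (lowPos σ') σ') := by simp only at h; rw [h, hp]
    _ = σ' := eraseBlock_insertBlock _ _

lemma mem_image_insertBlock {τ : ℕ → ℕ} {p : ℕ} (hτ : τ ∈ setH n) (h1 : τ 1 = 5)
    (hb : HasBlockAt τ p) : τ ∈ (fun σ => insertBlock (lowPos σ) σ) '' setH (n - 3) := by
  have hσ := hτ.1.eraseBlock hτ.2.1 hb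
  have hx : eraseBlock p τ p ≤ 1 := by simp only [eraseBlock, le_rfl, if_true]; grind [HasBlockAt]
  have hy : eraseBlock p τ (p + 1) ≤ 1 := by
    simp only [eraseBlock, show ¬ p + 1 ≤ p by omega, if_false]; grind [HasBlockAt]
  refine ⟨eraseBlock p τ, ⟨hσ, ?_, not_startsWith_joker_of_adjacent hσ.injective hx hy⟩, ?_⟩
  · simp [eraseBlock, h1]
  · simp only [lowPos_eq hσ.injective hx hy, insertBlock_eraseBlock hτ.1.injective hτ.2.1 hb]

theorem card_setH (hn : 6 ≤ n) :
    Nat.card (setH n) = Nat.card (setF (n - 3)) + Nat.card (setG (n - 3)) +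
      Nat.card (setF (n - 4)) + Nat.card (setG (n - 5)) + Nat.card (setH (n - 3)) := by
  let Φ := Sum.elim (mapsTo_prepend_210 hn).restrict <| Sum.elim (mapsTo_prepend_201 hn).restrict <|
    Sum.elim (mapsTo_prepend_2301 hn).restrict <| Sum.elim (mapsTo_prepend_24103 hn).restrict
      (mapsTo_insertBlock (n := n) (by omega)).restrict
  have hinj : Injective Φ := by
    -- the five classes are told apart by the second entry: `1, 0, 3, 4, 5`
    rintro (a | a | a | a | a) (b | b | b | b | b) h
    all_goals
      have h1 := congrFun (congrArg Subtype.val h) 1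
      simp only [Φ, Sum.elim_inl, Sum.elim_inr, Subtype.ext_iff, MapsTo.val_restrict_apply] at h h1
      simp only [Sum.inl.injEq, Sum.inr.injEq, reduceCtorEq]
    all_goals first
      | exact Subtype.ext (prepend_injective _ h)
      | exact Subtype.ext (injOn_insertBlock a.2 b.2 h)
      | (simp [prepend] at h1; done)
      | simp [prepend, insertBlock_one, a.2.2.1] at h1
      | simp [prepend, insertBlock_one, b.2.2.1] at h1
  have hsurj : Surjective Φ := by
    rintro ⟨τ, hτ⟩
    rcases mem_setH_cases hτ with hs | hs | hs | hs | ⟨h1, p, hb⟩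
    · obtain ⟨σ, ⟨hσ, h0⟩, rfl⟩ :=
        mem_image_prepend hτ.1 (by simp) (by simp; omega) (by decide) hs
      exact ⟨Sum.inl ⟨σ, hσ, by simpa using h0⟩, rfl⟩
    · obtain ⟨σ, ⟨hσ, h0⟩, rfl⟩ :=
        mem_image_prepend hτ.1 (by simp) (by simp; omega) (by decide) hs
      exact ⟨Sum.inr (Sum.inl ⟨σ, hσ, by simpa using h0⟩), rfl⟩
    · obtain ⟨σ, ⟨hσ, h0⟩, rfl⟩ :=
        mem_image_prepend hτ.1 (by simp) (by simp; omega) (by decide) hs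
      exact ⟨Sum.inr (Sum.inr (Sum.inl ⟨σ, hσ, by simpa using h0⟩)), rfl⟩
    · obtain ⟨σ, ⟨hσ, h0⟩, rfl⟩ :=
        mem_image_prepend hτ.1 (by simp) (by simp; omega) (by decide) hs
      exact ⟨Sum.inr (Sum.inr (Sum.inr (Sum.inl ⟨σ, hσ, by simp at h0; omega⟩))), rfl⟩
    · obtain ⟨σ, hσ, rfl⟩ := mem_image_insertBlock hτ h1 hb
      exact ⟨Sum.inr (Sum.inr (Sum.inr (Sum.inr ⟨σ, hσ⟩))), rfl⟩
  rw [← Nat.card_eq_of_bijective Φ ⟨hinj, hsurj⟩]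
  simp only [Nat.card_sum]
  ring

end Counting

theorem H_recurrence (n : ℕ) (hn : 6 ≤ n) :
    numH n = numF (n - 3) + numG (n - 3) + numF (n - 4) + numG (n - 5) + numH (n - 3) := by
  rw [numH_eq_natCard (by omega), numF_eq_natCard (by omega), numG_eq_natCard (by omega),
    numF_eq_natCard (by omega), numG_eq_natCard (by omega), numH_eq_natCard (by omega)]
  exact card_setH hn
end

section
/- Let π be a 3-bounded anchored permutation of [n] with π(2) = 4. Then the values 2 and 3 occur in adjacent positions of π, unless π begins with the five entries 1,4,2,5,3 (i.e., the Joker appears starting at position 1). -/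
/-- Zero-indexed: the paper's `π(2) = 4` means the entry at index `1` has value `3`;
the paper's values `2` and `3` are the zero-indexed values `1` and `2`, and the Joker
start `1,4,2,5,3` is the zero-indexed value sequence `0,3,1,4,2`. -/
theorem adjacent_two_three_unless_joker (n : ℕ) (hn : 4 ≤ n) (π : Equiv.Perm (Fin n))
    (hb : IsKBounded 3 n π) (ha : IsAnchored n π)
    (h2 : (π ⟨1, by omega⟩ : ℕ) = 3) :
    (∃ i j : Fin n, (j : ℕ) = (i : ℕ) + 1 ∧
      (((π i : ℕ) = 1 ∧ (π j : ℕ) = 2) ∨ ((π i : ℕ) = 2 ∧ (π j : ℕ) = 1))) ∨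
    (∃ h5 : 5 ≤ n, (π ⟨0, by omega⟩ : ℕ) = 0 ∧ (π ⟨1, by omega⟩ : ℕ) = 3 ∧
      (π ⟨2, by omega⟩ : ℕ) = 1 ∧ (π ⟨3, by omega⟩ : ℕ) = 4 ∧ (π ⟨4, by omega⟩ : ℕ) = 2) := by
  have h0 : (π ⟨0, by omega⟩ : ℕ) = 0 := by
    have := (ha ⟨0, by omega⟩).1 rfl
    rw [this]
  have hl : (π ⟨n - 1, by omega⟩ : ℕ) = n - 1 := by
    have := (ha ⟨n - 1, by omega⟩).2 rfl
    rw [this]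
  have hinj : ∀ a b : Fin n, (π a : ℕ) = (π b : ℕ) → (a : ℕ) = (b : ℕ) := by
    intro a b h
    exact congrArg Fin.val (π.injective (Fin.ext h))
  have hb' : ∀ a b : Fin n, (b : ℕ) = (a : ℕ) + 1 →
      (π b : ℕ) ≤ (π a : ℕ) + 3 ∧ (π a : ℕ) ≤ (π b : ℕ) + 3 := by
    intro a b h
    have := hb a b h
    omega
  -- p is the position of value 1
  obtain ⟨p, hp⟩ : ∃ p : Fin n, (π p : ℕ) = 1 :=
    ⟨π.symm ⟨1, by omega⟩, by rw [Equiv.apply_symm_apply]⟩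
  have hp0 : (p : ℕ) ≠ 0 := by
    intro h
    have hpe : p = (⟨0, by omega⟩ : Fin n) := Fin.ext h
    rw [hpe, h0] at hp
    omega
  have hp1 : (p : ℕ) ≠ 1 := by
    intro h
    have hpe : p = (⟨1, by omega⟩ : Fin n) := Fin.ext h
    rw [hpe, h2] at hp
    omega
  have hpl : (p : ℕ) ≠ n - 1 := by
    intro h
    have hpe : p = (⟨n - 1, by omega⟩ : Fin n) := Fin.ext h
    rw [hpe, hl] at hp
    omega
  have hplt : (p : ℕ) < n := p.isLt
  by_cases hcase : (p : ℕ) = 2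
  · -- value 1 is at position 2
    have hπ2 : (π ⟨2, by omega⟩ : ℕ) = 1 := by
      have hpe : p = (⟨2, by omega⟩ : Fin n) := Fin.ext hcase
      rw [← hpe]
      exact hp
    -- look at π(3)
    have h3lt : (3 : ℕ) < n := by omega
    have hbd3 := hb' ⟨2, by omega⟩ ⟨3, h3lt⟩ rfl
    obtain ⟨a, hav⟩ : ∃ a, (π ⟨3, h3lt⟩ : ℕ) = a := ⟨_, rfl⟩
    rw [hπ2, hav] at hbd3
    have ha0 : a ≠ 0 := by
      intro h
      have := hinj ⟨3, h3lt⟩ ⟨0, by omega⟩ (hav.trans (h.trans h0.symm))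
      simp at this
    have ha3 : a ≠ 3 := by
      intro h
      have := hinj ⟨3, h3lt⟩ ⟨1, by omega⟩ (hav.trans (h.trans h2.symm))
      simp at this
    have ha1 : a ≠ 1 := by
      intro h
      have := hinj ⟨3, h3lt⟩ ⟨2, by omega⟩ (hav.trans (h.trans hπ2.symm))
      simp at this
    by_cases ha2 : a = 2
    · exact Or.inl ⟨⟨2, by omega⟩, ⟨3, h3lt⟩, rfl, Or.inl ⟨hπ2, hav.trans ha2⟩⟩
    · have ha4 : a = 4 := by omega
      have hn5 : 5 ≤ n := by
        have := (π ⟨3, h3lt⟩).isLt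
        omega
      -- q is the position of value 2
      obtain ⟨q, hq⟩ : ∃ q : Fin n, (π q : ℕ) = 2 :=
        ⟨π.symm ⟨2, by omega⟩, by rw [Equiv.apply_symm_apply]⟩
      have hq0 : (q : ℕ) ≠ 0 := by
        intro h
        have hqe : q = (⟨0, by omega⟩ : Fin n) := Fin.ext h
        rw [hqe, h0] at hq; omega
      have hq1 : (q : ℕ) ≠ 1 := by
        intro h
        have hqe : q = (⟨1, by omega⟩ : Fin n) := Fin.ext h
        rw [hqe, h2] at hq; omega
      have hq2 : (q : ℕ) ≠ 2 := by
        intro h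
        have hqe : q = (⟨2, by omega⟩ : Fin n) := Fin.ext h
        rw [hqe, hπ2] at hq; omega
      have hq3 : (q : ℕ) ≠ 3 := by
        intro h
        have hqe : q = (⟨3, h3lt⟩ : Fin n) := Fin.ext h
        rw [hqe, hav] at hq; omega
      have hql : (q : ℕ) ≠ n - 1 := by
        intro h
        have hqe : q = (⟨n - 1, by omega⟩ : Fin n) := Fin.ext h
        rw [hqe, hl] at hq
        omega
      have hq4 : 4 ≤ (q : ℕ) := by omega
      have hqlt : (q : ℕ) < n - 1 := by
        have := q.isLt; omega
      have hqm1 : (q : ℕ) - 1 < n := by omega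
      have hqp1 : (q : ℕ) + 1 < n := by omega
      have hadjm : (q : ℕ) = ((⟨(q : ℕ) - 1, hqm1⟩ : Fin n) : ℕ) + 1 := by
        simp; omega
      have hbdm := hb' ⟨(q : ℕ) - 1, hqm1⟩ q hadjm
      obtain ⟨b, hbv⟩ : ∃ b, (π ⟨(q : ℕ) - 1, hqm1⟩ : ℕ) = b := ⟨_, rfl⟩
      rw [hq, hbv] at hbdm
      have hb0 : b ≠ 0 := by
        intro h
        have := hinj ⟨(q : ℕ) - 1, hqm1⟩ ⟨0, by omega⟩ (hbv.trans (h.trans h0.symm))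
        simp at this; omega
      have hb3 : b ≠ 3 := by
        intro h
        have := hinj ⟨(q : ℕ) - 1, hqm1⟩ ⟨1, by omega⟩ (hbv.trans (h.trans h2.symm))
        simp at this; omega
      have hb1 : b ≠ 1 := by
        intro h
        have := hinj ⟨(q : ℕ) - 1, hqm1⟩ ⟨2, by omega⟩ (hbv.trans (h.trans hπ2.symm))
        simp at this; omega
      have hb2 : b ≠ 2 := by
        intro h
        have := hinj ⟨(q : ℕ) - 1, hqm1⟩ q (hbv.trans (h.trans hq.symm))
        simp at this; omega
      by_cases hb4 : b = 4
      · -- the Joker: q - 1 = 3, so q = 4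
        have hq4' : (q : ℕ) = 4 := by
          have := hinj ⟨(q : ℕ) - 1, hqm1⟩ ⟨3, h3lt⟩ (hbv.trans (hb4.trans (ha4.symm.trans hav.symm)))
          simp at this; omega
        have hqe : q = (⟨4, by omega⟩ : Fin n) := Fin.ext hq4'
        rw [hqe] at hq
        exact Or.inr ⟨hn5, h0, h2, hπ2, hav.trans ha4, hq⟩
      · have hb5 : b = 5 := by omega
        -- now π(q+1) has no possible value
        have hadjp : ((⟨(q : ℕ) + 1, hqp1⟩ : Fin n) : ℕ) = (q : ℕ) + 1 := rfl
        have hbdp := hb' q ⟨(q : ℕ) + 1, hqp1⟩ hadjp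
        obtain ⟨c, hcv⟩ : ∃ c, (π ⟨(q : ℕ) + 1, hqp1⟩ : ℕ) = c := ⟨_, rfl⟩
        rw [hq, hcv] at hbdp
        have hc0 : c ≠ 0 := by
          intro h
          have := hinj ⟨(q : ℕ) + 1, hqp1⟩ ⟨0, by omega⟩ (hcv.trans (h.trans h0.symm))
          simp at this
        have hc3 : c ≠ 3 := by
          intro h
          have := hinj ⟨(q : ℕ) + 1, hqp1⟩ ⟨1, by omega⟩ (hcv.trans (h.trans h2.symm))
          simp at this; omega
        have hc1 : c ≠ 1 := by
          intro h
          have := hinj ⟨(q : ℕ) + 1, hqp1⟩ ⟨2, by omega⟩ (hcv.trans (h.trans hπ2.symm))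
          simp at this; omega
        have hc2 : c ≠ 2 := by
          intro h
          have := hinj ⟨(q : ℕ) + 1, hqp1⟩ q (hcv.trans (h.trans hq.symm))
          simp at this
        have hc4 : c ≠ 4 := by
          intro h
          have := hinj ⟨(q : ℕ) + 1, hqp1⟩ ⟨3, h3lt⟩ (hcv.trans (h.trans (ha4.symm.trans hav.symm)))
          simp at this; omega
        have hc5 : c ≠ 5 := by
          intro h
          have := hinj ⟨(q : ℕ) + 1, hqp1⟩ ⟨(q : ℕ) - 1, hqm1⟩
            (hcv.trans (h.trans (hb5.symm.trans hbv.symm)))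
          simp at this; omega
        omega
  · -- value 1 is at position p ≥ 3; its two neighbors must include value 2
    have hp3 : 3 ≤ (p : ℕ) := by omega
    have hplt' : (p : ℕ) < n - 1 := by omega
    have hpm1 : (p : ℕ) - 1 < n := by omega
    have hpp1 : (p : ℕ) + 1 < n := by omega
    have hadjm : (p : ℕ) = ((⟨(p : ℕ) - 1, hpm1⟩ : Fin n) : ℕ) + 1 := by
      simp; omega
    have hbdm := hb' ⟨(p : ℕ) - 1, hpm1⟩ p hadjm
    obtain ⟨b, hbv⟩ : ∃ b, (π ⟨(p : ℕ) - 1, hpm1⟩ : ℕ) = b := ⟨_, rfl⟩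
    rw [hp, hbv] at hbdm
    have hb0 : b ≠ 0 := by
      intro h
      have := hinj ⟨(p : ℕ) - 1, hpm1⟩ ⟨0, by omega⟩ (hbv.trans (h.trans h0.symm))
      simp at this; omega
    have hb3 : b ≠ 3 := by
      intro h
      have := hinj ⟨(p : ℕ) - 1, hpm1⟩ ⟨1, by omega⟩ (hbv.trans (h.trans h2.symm))
      simp at this; omega
    have hb1 : b ≠ 1 := by
      intro h
      have := hinj ⟨(p : ℕ) - 1, hpm1⟩ p (hbv.trans (h.trans hp.symm))
      simp at this; omega
    by_cases hb2 : b = 2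
    · exact Or.inl ⟨⟨(p : ℕ) - 1, hpm1⟩, p, hadjm, Or.inr ⟨hbv.trans hb2, hp⟩⟩
    · have hb4 : b = 4 := by omega
      have hadjp : ((⟨(p : ℕ) + 1, hpp1⟩ : Fin n) : ℕ) = (p : ℕ) + 1 := rfl
      have hbdp := hb' p ⟨(p : ℕ) + 1, hpp1⟩ hadjp
      obtain ⟨c, hcv⟩ : ∃ c, (π ⟨(p : ℕ) + 1, hpp1⟩ : ℕ) = c := ⟨_, rfl⟩
      rw [hp, hcv] at hbdp
      have hc0 : c ≠ 0 := by
        intro h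
        have := hinj ⟨(p : ℕ) + 1, hpp1⟩ ⟨0, by omega⟩ (hcv.trans (h.trans h0.symm))
        simp at this
      have hc3 : c ≠ 3 := by
        intro h
        have := hinj ⟨(p : ℕ) + 1, hpp1⟩ ⟨1, by omega⟩ (hcv.trans (h.trans h2.symm))
        simp at this; omega
      have hc1 : c ≠ 1 := by
        intro h
        have := hinj ⟨(p : ℕ) + 1, hpp1⟩ p (hcv.trans (h.trans hp.symm))
        simp at this
      have hc4 : c ≠ 4 := by
        intro h
        have := hinj ⟨(p : ℕ) + 1, hpp1⟩ ⟨(p : ℕ) - 1, hpm1⟩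
          (hcv.trans (h.trans (hb4.symm.trans hbv.symm)))
        simp at this; omega
      have hc2 : c = 2 := by omega
      exact Or.inl ⟨p, ⟨(p : ℕ) + 1, hpp1⟩, hadjp, Or.inl ⟨hp, hcv.trans hc2⟩⟩
end

section
/- If π is a 3-bounded anchored permutation of [n] beginning with entries 1, 4, 6 (so π(1)=1, π(2)=4, π(3)=6), then n ≥ 6 and π(4) = 3, π(5) = 2, and π(6) = 5. -/
/-- Zero-indexed: paper entries `1,4,6` at positions `1..3` are values `0,3,5` at indices `0..2`. -/
theorem starts_146 (n : ℕ) (hn : 6 ≤ n) (π : Equiv.Perm (Fin n))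
    (hb : IsKBounded 3 n π) (ha : IsAnchored n π)
    (h1 : (π ⟨0, by omega⟩ : ℕ) = 0) (h2 : (π ⟨1, by omega⟩ : ℕ) = 3)
    (h3 : (π ⟨2, by omega⟩ : ℕ) = 5) :
    (π ⟨3, by omega⟩ : ℕ) = 2 ∧ (π ⟨4, by omega⟩ : ℕ) = 1 ∧ (π ⟨5, by omega⟩ : ℕ) = 4 := by
  have step : ∀ (i j : ℕ) (hi : i < n) (hj : j < n), j = i + 1 →
      (π ⟨j, hj⟩ : ℕ) ≤ (π ⟨i, hi⟩ : ℕ) + 3 ∧ (π ⟨i, hi⟩ : ℕ) ≤ (π ⟨j, hj⟩ : ℕ) + 3 := by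
    intro i j hi hj h
    have := hb ⟨i, hi⟩ ⟨j, hj⟩ h
    omega
  have inj : ∀ (i j : ℕ) (hi : i < n) (hj : j < n),
      (π ⟨i, hi⟩ : ℕ) = (π ⟨j, hj⟩ : ℕ) → i = j := by
    intro i j hi hj h
    have hf : π ⟨i, hi⟩ = π ⟨j, hj⟩ := Fin.ext h
    exact congrArg Fin.val (π.injective hf)
  have congrv : ∀ (i j : ℕ) (hi : i < n) (hj : j < n), i = j →
      (π ⟨i, hi⟩ : ℕ) = (π ⟨j, hj⟩ : ℕ) := by
    intro i j hi hj h
    subst h; rfl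
  have hlastn : n - 1 < n := by omega
  have hlast : (π ⟨n - 1, hlastn⟩ : ℕ) = n - 1 :=
    congrArg Fin.val ((ha ⟨n - 1, hlastn⟩).2 rfl)
  have h0n : (0 : ℕ) < n := by omega
  have h1n : (1 : ℕ) < n := by omega
  have h2n : (2 : ℕ) < n := by omega
  have h3n : (3 : ℕ) < n := by omega
  have h4n : (4 : ℕ) < n := by omega
  have h5n : (5 : ℕ) < n := by omega
  have pre : ∀ v : ℕ, v < n → ∃ (p : ℕ) (h : p < n), (π ⟨p, h⟩ : ℕ) = v := by
    intro v hv
    refine ⟨(π.symm ⟨v, hv⟩ : ℕ), (π.symm ⟨v, hv⟩).isLt, ?_⟩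
    rw [Fin.eta, Equiv.apply_symm_apply]
  refine (pre 1 h1n).elim fun p hp' => hp'.elim fun hpn hp => ?_
  refine (pre 2 h2n).elim fun q hq' => hq'.elim fun hqn hq => ?_
  clear hp' hq'
  -- p ∉ {0,1,2,n-1}
  have hp0 : p ≠ 0 := fun h => by have := congrv p 0 hpn h0n h; omega
  have hp1 : p ≠ 1 := fun h => by have := congrv p 1 hpn h1n h; omega
  have hp2 : p ≠ 2 := fun h => by have := congrv p 2 hpn h2n h; omega
  have hpl : p ≠ n - 1 := fun h => by have := congrv p (n-1) hpn hlastn h; omega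
  have hp3 : 3 ≤ p := by omega
  have hpm : p - 1 < n := by omega
  have hpU : p + 1 < n := by omega
  -- neighbors of the position of value 1
  have hstA := step (p-1) p hpm hpn (by omega)
  have hstB := step p (p+1) hpn hpU rfl
  have hA1 : (π ⟨p-1, hpm⟩ : ℕ) ≠ 1 := fun h => by
    have := inj (p-1) p hpm hpn (h.trans hp.symm); omega
  have hA0 : (π ⟨p-1, hpm⟩ : ℕ) ≠ 0 := fun h => by
    have := inj (p-1) 0 hpm h0n (h.trans h1.symm); omega
  have hA3 : (π ⟨p-1, hpm⟩ : ℕ) ≠ 3 := fun h => by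
    have := inj (p-1) 1 hpm h1n (h.trans h2.symm); omega
  have hB1 : (π ⟨p+1, hpU⟩ : ℕ) ≠ 1 := fun h => by
    have := inj (p+1) p hpU hpn (h.trans hp.symm); omega
  have hB0 : (π ⟨p+1, hpU⟩ : ℕ) ≠ 0 := fun h => by
    have := inj (p+1) 0 hpU h0n (h.trans h1.symm); omega
  have hB3 : (π ⟨p+1, hpU⟩ : ℕ) ≠ 3 := fun h => by
    have := inj (p+1) 1 hpU h1n (h.trans h2.symm); omega
  have hAB : (π ⟨p-1, hpm⟩ : ℕ) ≠ (π ⟨p+1, hpU⟩ : ℕ) := fun h => by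
    have := inj (p-1) (p+1) hpm hpU h; omega
  have hA : (π ⟨p-1, hpm⟩ : ℕ) = 2 ∨ (π ⟨p-1, hpm⟩ : ℕ) = 4 := by omega
  have hB : (π ⟨p+1, hpU⟩ : ℕ) = 2 ∨ (π ⟨p+1, hpU⟩ : ℕ) = 4 := by omega
  -- q ∉ {0,1,2,n-1}
  have hq0 : q ≠ 0 := fun h => by have := congrv q 0 hqn h0n h; omega
  have hq1 : q ≠ 1 := fun h => by have := congrv q 1 hqn h1n h; omega
  have hq2 : q ≠ 2 := fun h => by have := congrv q 2 hqn h2n h; omega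
  have hql : q ≠ n - 1 := fun h => by have := congrv q (n-1) hqn hlastn h; omega
  -- key claim: q = 3
  have hq3 : q = 3 := by
    by_contra hq3
    have hq4 : 4 ≤ q := by omega
    have hqm : q - 1 < n := by omega
    have hqU : q + 1 < n := by omega
    have hstC := step (q-1) q hqm hqn (by omega)
    have hstD := step q (q+1) hqn hqU rfl
    have hC2 : (π ⟨q-1, hqm⟩ : ℕ) ≠ 2 := fun h => by
      have := inj (q-1) q hqm hqn (h.trans hq.symm); omega
    have hC0 : (π ⟨q-1, hqm⟩ : ℕ) ≠ 0 := fun h => by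
      have := inj (q-1) 0 hqm h0n (h.trans h1.symm); omega
    have hC3 : (π ⟨q-1, hqm⟩ : ℕ) ≠ 3 := fun h => by
      have := inj (q-1) 1 hqm h1n (h.trans h2.symm); omega
    have hC5 : (π ⟨q-1, hqm⟩ : ℕ) ≠ 5 := fun h => by
      have := inj (q-1) 2 hqm h2n (h.trans h3.symm); omega
    have hD2 : (π ⟨q+1, hqU⟩ : ℕ) ≠ 2 := fun h => by
      have := inj (q+1) q hqU hqn (h.trans hq.symm); omega
    have hD0 : (π ⟨q+1, hqU⟩ : ℕ) ≠ 0 := fun h => by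
      have := inj (q+1) 0 hqU h0n (h.trans h1.symm); omega
    have hD3 : (π ⟨q+1, hqU⟩ : ℕ) ≠ 3 := fun h => by
      have := inj (q+1) 1 hqU h1n (h.trans h2.symm); omega
    have hD5 : (π ⟨q+1, hqU⟩ : ℕ) ≠ 5 := fun h => by
      have := inj (q+1) 2 hqU h2n (h.trans h3.symm); omega
    have hCD : (π ⟨q-1, hqm⟩ : ℕ) ≠ (π ⟨q+1, hqU⟩ : ℕ) := fun h => by
      have := inj (q-1) (q+1) hqm hqU h; omega
    have hC : (π ⟨q-1, hqm⟩ : ℕ) = 1 ∨ (π ⟨q-1, hqm⟩ : ℕ) = 4 := by omega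
    have hD : (π ⟨q+1, hqU⟩ : ℕ) = 1 ∨ (π ⟨q+1, hqU⟩ : ℕ) = 4 := by omega
    rcases hA with hA2 | hA4v
    · have e1 : p - 1 = q := inj (p-1) q hpm hqn (hA2.trans hq.symm)
      have hBv : (π ⟨p+1, hpU⟩ : ℕ) = 4 := by omega
      rcases hC with hC1 | hC4
      · have e2 : q - 1 = p := inj (q-1) p hqm hpn (hC1.trans hp.symm)
        omega
      · have e2 : q - 1 = p + 1 := inj (q-1) (p+1) hqm hpU (hC4.trans hBv.symm)
        omega
    · have hBv : (π ⟨p+1, hpU⟩ : ℕ) = 2 := by omega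
      have e1 : p + 1 = q := inj (p+1) q hpU hqn (hBv.trans hq.symm)
      rcases hD with hD1 | hD4
      · have e2 : q + 1 = p := inj (q+1) p hqU hpn (hD1.trans hp.symm)
        omega
      · have e2 : q + 1 = p - 1 := inj (q+1) (p-1) hqU hpm (hD4.trans hA4v.symm)
        omega
  have g1 : (π ⟨3, h3n⟩ : ℕ) = 2 := by
    have := congrv 3 q h3n hqn hq3.symm
    omega
  have h45 : (π ⟨4, h4n⟩ : ℕ) ≤ 5 := by
    have := step 3 4 h3n h4n rfl; omega
  have h4ne0 : (π ⟨4, h4n⟩ : ℕ) ≠ 0 := fun h => by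
    have := inj 4 0 h4n h0n (h.trans h1.symm); omega
  have h4ne3 : (π ⟨4, h4n⟩ : ℕ) ≠ 3 := fun h => by
    have := inj 4 1 h4n h1n (h.trans h2.symm); omega
  have h4ne5 : (π ⟨4, h4n⟩ : ℕ) ≠ 5 := fun h => by
    have := inj 4 2 h4n h2n (h.trans h3.symm); omega
  have h4ne2 : (π ⟨4, h4n⟩ : ℕ) ≠ 2 := fun h => by
    have := inj 4 3 h4n h3n (h.trans g1.symm); omega
  have g2 : (π ⟨4, h4n⟩ : ℕ) = 1 := by
    by_contra hg2
    have h44 : (π ⟨4, h4n⟩ : ℕ) = 4 := by omega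
    rcases hA with hA2 | hA4v
    · have e1 : p - 1 = 3 := inj (p-1) 3 hpm h3n (hA2.trans g1.symm)
      have hBv : (π ⟨p+1, hpU⟩ : ℕ) = 4 := by omega
      have e2 : p + 1 = 4 := inj (p+1) 4 hpU h4n (hBv.trans h44.symm)
      omega
    · have e1 : p - 1 = 4 := inj (p-1) 4 hpm h4n (hA4v.trans h44.symm)
      have hBv : (π ⟨p+1, hpU⟩ : ℕ) = 2 := by omega
      have e2 : p + 1 = 3 := inj (p+1) 3 hpU h3n (hBv.trans g1.symm)
      omega
  have hp4 : p = 4 := inj p 4 hpn h4n (hp.trans g2.symm)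
  have g3 : (π ⟨5, h5n⟩ : ℕ) = 4 := by
    have hB5 : (π ⟨p+1, hpU⟩ : ℕ) = (π ⟨5, h5n⟩ : ℕ) := congrv (p+1) 5 hpU h5n (by omega)
    have hBne2 : (π ⟨p+1, hpU⟩ : ℕ) ≠ 2 := fun h => by
      have := inj (p+1) 3 hpU h3n (h.trans g1.symm); omega
    omega
  refine ⟨?_, ?_, ?_⟩
  · have := congrv 3 3 (by omega) h3n rfl; omega
  · have := congrv 4 4 (by omega) h4n rfl; omega
  · have := congrv 5 5 (by omega) h5n rfl; omega
end
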